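/- arXiv:2110.08706 — 8 statements merged into one kernel-verified Lean document; each statement's English description precedes it below -/
import Mathlib

section
/- Every tournament on 4 vertices whose multiset of out-degrees is {2,2,1,1} or {3,2,1,0} is (2,3)-cordial. -/
/-- A `(0,1)`-vertex labelling is friendly if the numbers of vertices labelled `0`
and labelled `1` differ by at most one. -/
def Friendly {V : Type*} (f : V → Fin 2) : Prop :=
  |(Nat.card {v : V // f v = 0} : ℤ) - (Nat.card {v : V // f v = 1} : ℤ)| ≤ 1

/-- The number of arcs of the digraph `D` whose induced label `f(head) - f(tail)`
equals `x`. -/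
noncomputable def arcCount {V : Type*} (D : V → V → Prop) (f : V → Fin 2) (x : ℤ) : ℕ :=
  Nat.card {p : V × V // D p.1 p.2 ∧ ((f p.2).val : ℤ) - ((f p.1).val : ℤ) = x}

/-- A digraph is `(2,3)`-cordial if some friendly vertex labelling induces an arc
labelling in which the numbers of arcs labelled `1`, `-1`, `0` pairwise differ by
at most one. -/
def Cordial23 {V : Type*} (D : V → V → Prop) : Prop :=
  ∃ f : V → Fin 2, Friendly f ∧
    |(arcCount D f 1 : ℤ) - (arcCount D f (-1) : ℤ)| ≤ 1 ∧
    |(arcCount D f 1 : ℤ) - (arcCount D f 0 : ℤ)| ≤ 1 ∧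
    |(arcCount D f (-1) : ℤ) - (arcCount D f 0 : ℤ)| ≤ 1

/-- A tournament: a loopless digraph with exactly one arc between every pair of
distinct vertices. -/
def IsTournament {V : Type*} (D : V → V → Prop) : Prop :=
  (∀ v : V, ¬ D v v) ∧ ∀ u v : V, u ≠ v → (D u v ↔ ¬ D v u)

/-- A (simple) digraph: loopless, with at most one arc between any two distinct
vertices (an orientation of a simple graph). -/
def IsDigraph {V : Type*} (D : V → V → Prop) : Prop :=
  (∀ v : V, ¬ D v v) ∧ ∀ u v : V, D u v → ¬ D v u

/- ## Auxiliary definitions and lemmas -/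

def cnt (T : Fin 4 → Fin 4 → Bool) (f : Fin 4 → Fin 2) (x : ℤ) : ℕ :=
  (Finset.univ.filter (fun p : Fin 4 × Fin 4 =>
     T p.1 p.2 = true ∧ ((f p.2).val : ℤ) - ((f p.1).val : ℤ) = x)).card

def degB (T : Fin 4 → Fin 4 → Bool) (v : Fin 4) : ℕ :=
  (Finset.univ.filter (fun u => T v u = true)).card

def mk4 (a b c d e f : Bool) : Fin 4 → Fin 4 → Bool := fun i j =>
  match i, j with
  | 0, 1 => a | 0, 2 => b | 0, 3 => c | 1, 2 => d | 1, 3 => e | 2, 3 => f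
  | 1, 0 => !a | 2, 0 => !b | 3, 0 => !c | 2, 1 => !d | 3, 1 => !e | 3, 2 => !f
  | _, _ => false

set_option maxRecDepth 20000 in
lemma key : ∀ a b c d e f : Bool,
    (Finset.univ.val.map (degB (mk4 a b c d e f)) = ({2,2,1,1} : Multiset ℕ) ∨
     Finset.univ.val.map (degB (mk4 a b c d e f)) = ({3,2,1,0} : Multiset ℕ)) →
    ∃ g : Fin 4 → Fin 2,
      |((Finset.univ.filter (fun v => g v = 0)).card : ℤ) -
        ((Finset.univ.filter (fun v => g v = 1)).card : ℤ)| ≤ 1 ∧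
      |(cnt (mk4 a b c d e f) g 1 : ℤ) - (cnt (mk4 a b c d e f) g (-1) : ℤ)| ≤ 1 ∧
      |(cnt (mk4 a b c d e f) g 1 : ℤ) - (cnt (mk4 a b c d e f) g 0 : ℤ)| ≤ 1 ∧
      |(cnt (mk4 a b c d e f) g (-1) : ℤ) - (cnt (mk4 a b c d e f) g 0 : ℤ)| ≤ 1 := by
  decide

lemma arc_transfer {V : Type*} (e : V ≃ Fin 4) (D : V → V → Prop)
    (T : Fin 4 → Fin 4 → Bool)
    (hd : ∀ i j, T i j = true ↔ D (e.symm i) (e.symm j)) (g : Fin 4 → Fin 2) (x : ℤ) :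
    arcCount D (g ∘ e) x = cnt T g x := by
  classical
  rw [arcCount, cnt]
  have E : {p : V × V // D p.1 p.2 ∧ ((g (e p.2) : ℤ)) - ((g (e p.1) : ℤ)) = x} ≃
      {q : Fin 4 × Fin 4 // T q.1 q.2 = true ∧ ((g q.2 : ℤ)) - ((g q.1 : ℤ)) = x} :=
    (Equiv.prodCongr e e).subtypeEquiv (fun p => by simp [hd])
  simp only [Function.comp]
  rw [Nat.card_congr E, Nat.card_eq_fintype_card, Fintype.card_subtype]

lemma deg_transfer {V : Type*} (e : V ≃ Fin 4) (D : V → V → Prop)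
    (T : Fin 4 → Fin 4 → Bool)
    (hd : ∀ i j, T i j = true ↔ D (e.symm i) (e.symm j)) (i : Fin 4) :
    Nat.card {u : V // D (e.symm i) u} = degB T i := by
  classical
  have E : {u : V // D (e.symm i) u} ≃ {j : Fin 4 // T i j = true} :=
    e.subtypeEquiv (fun u => by simp [hd])
  rw [Nat.card_congr E, Nat.card_eq_fintype_card, Fintype.card_subtype, degB]

/-- Every 4-tournament whose multiset of out-degrees is {2,2,1,1} or {3,2,1,0}
is (2,3)-cordial. -/
theorem four_tournament_cordial {V : Type*} [Fintype V] (hV : Fintype.card V = 4)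
    (D : V → V → Prop) (hT : IsTournament D)
    (hdeg : Finset.univ.val.map (fun v : V => Nat.card {u : V // D v u}) = ({2, 2, 1, 1} : Multiset ℕ) ∨
            Finset.univ.val.map (fun v : V => Nat.card {u : V // D v u}) = ({3, 2, 1, 0} : Multiset ℕ)) :
    Cordial23 D := by
  classical
  obtain e := Fintype.equivFinOfCardEq hV
  set T : Fin 4 → Fin 4 → Bool := fun i j => decide (D (e.symm i) (e.symm j)) with hTdef
  have hd : ∀ i j, T i j = true ↔ D (e.symm i) (e.symm j) := fun i j => decide_eq_true_iff
  have h0 : ∀ i, T i i = false := by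
    intro i; simp only [hTdef, decide_eq_false_iff_not]; exact hT.1 _
  have h1 : ∀ i j : Fin 4, i ≠ j → T j i = !T i j := by
    intro i j hij
    have hne : e.symm j ≠ e.symm i := fun h => hij (e.symm.injective h).symm
    have h2 := hT.2 _ _ hne
    simp only [hTdef]
    by_cases hc : D (e.symm i) (e.symm j)
    · have hni : ¬ D (e.symm j) (e.symm i) := fun h => (h2.mp h) hc
      simp [hc, hni]
    · have hyi : D (e.symm j) (e.symm i) := h2.mpr hc
      simp [hc, hyi]
  have hTmk : T = mk4 (T 0 1) (T 0 2) (T 0 3) (T 1 2) (T 1 3) (T 2 3) := by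
    funext i j
    fin_cases i <;> fin_cases j <;>
      simp [mk4, h0] <;> first | rfl | (rw [h1] <;> decide)
  -- transfer the degree hypothesis
  have huniv : (Finset.univ : Finset V).val = Multiset.map e.symm (Finset.univ : Finset (Fin 4)).val :=
    (Multiset.map_univ_val_equiv e.symm).symm
  have hmap : Finset.univ.val.map (fun v : V => Nat.card {u : V // D v u}) =
      Finset.univ.val.map (degB T) := by
    rw [huniv, Multiset.map_map]
    exact Multiset.map_congr rfl (fun i _ => deg_transfer e D T hd i)
  rw [hmap] at hdeg
  rw [hTmk] at hdeg
  obtain ⟨g, hg0, hg1, hg2, hg3⟩ := key _ _ _ _ _ _ hdeg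
  rw [← hTmk] at hg1 hg2 hg3
  refine ⟨g ∘ e, ?_, ?_, ?_, ?_⟩
  · -- Friendly
    rw [Friendly]
    have E0 : {v : V // (g ∘ e) v = 0} ≃ {i : Fin 4 // g i = 0} :=
      e.subtypeEquiv (fun v => by simp)
    have E1 : {v : V // (g ∘ e) v = 1} ≃ {i : Fin 4 // g i = 1} :=
      e.subtypeEquiv (fun v => by simp)
    rw [Nat.card_congr E0, Nat.card_congr E1, Nat.card_eq_fintype_card,
      Nat.card_eq_fintype_card, Fintype.card_subtype, Fintype.card_subtype]
    exact hg0
  · rw [arc_transfer e D T hd, arc_transfer e D T hd]; exact hg1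
  · rw [arc_transfer e D T hd, arc_transfer e D T hd]; exact hg2
  · rw [arc_transfer e D T hd, arc_transfer e D T hd]; exact hg3
end

section
/- No tournament on 4 vertices whose multiset of out-degrees is {2,2,2,0} or {3,1,1,1} is (2,3)-cordial. -/
def mkT (a b c d e f : Bool) : Fin 4 → Fin 4 → Bool :=
  ![![false, a, b, c], ![!a, false, d, e], ![!b, !d, false, f], ![!c, !e, !f, false]]



theorem key_s6 : ∀ a b c d e f : Bool,
    ((Finset.univ.val.map (fun i : Fin 4 =>
        (Finset.univ.filter (fun j => mkT a b c d e f i j = true)).card)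
        = ({2, 2, 2, 0} : Multiset ℕ)) ∨
     (Finset.univ.val.map (fun i : Fin 4 =>
        (Finset.univ.filter (fun j => mkT a b c d e f i j = true)).card)
        = ({3, 1, 1, 1} : Multiset ℕ))) →
    ∀ x0 x1 x2 x3 : Fin 2,
      |((Finset.univ.filter (fun i : Fin 4 => ![x0,x1,x2,x3] i = 0)).card : ℤ)
        - ((Finset.univ.filter (fun i : Fin 4 => ![x0,x1,x2,x3] i = 1)).card : ℤ)| ≤ 1 →
      ¬ (|((Finset.univ.filter (fun q : Fin 4 × Fin 4 =>
              mkT a b c d e f q.1 q.2 = true ∧ ((![x0,x1,x2,x3] q.2 : Fin 2).val : ℤ) - ((![x0,x1,x2,x3] q.1 : Fin 2).val : ℤ) = 1)).card : ℤ)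
          - ((Finset.univ.filter (fun q : Fin 4 × Fin 4 =>
              mkT a b c d e f q.1 q.2 = true ∧ ((![x0,x1,x2,x3] q.2 : Fin 2).val : ℤ) - ((![x0,x1,x2,x3] q.1 : Fin 2).val : ℤ) = -1)).card : ℤ)| ≤ 1 ∧
         |((Finset.univ.filter (fun q : Fin 4 × Fin 4 =>
              mkT a b c d e f q.1 q.2 = true ∧ ((![x0,x1,x2,x3] q.2 : Fin 2).val : ℤ) - ((![x0,x1,x2,x3] q.1 : Fin 2).val : ℤ) = 1)).card : ℤ)
          - ((Finset.univ.filter (fun q : Fin 4 × Fin 4 =>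
              mkT a b c d e f q.1 q.2 = true ∧ ((![x0,x1,x2,x3] q.2 : Fin 2).val : ℤ) - ((![x0,x1,x2,x3] q.1 : Fin 2).val : ℤ) = 0)).card : ℤ)| ≤ 1 ∧
         |((Finset.univ.filter (fun q : Fin 4 × Fin 4 =>
              mkT a b c d e f q.1 q.2 = true ∧ ((![x0,x1,x2,x3] q.2 : Fin 2).val : ℤ) - ((![x0,x1,x2,x3] q.1 : Fin 2).val : ℤ) = -1)).card : ℤ)
          - ((Finset.univ.filter (fun q : Fin 4 × Fin 4 =>
              mkT a b c d e f q.1 q.2 = true ∧ ((![x0,x1,x2,x3] q.2 : Fin 2).val : ℤ) - ((![x0,x1,x2,x3] q.1 : Fin 2).val : ℤ) = 0)).card : ℤ)| ≤ 1) := by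
  decide


/-- No 4-tournament whose multiset of out-degrees is {2,2,2,0} or {3,1,1,1}
is (2,3)-cordial. -/
theorem four_tournament_not_cordial {V : Type*} [Fintype V] (hV : Fintype.card V = 4)
    (D : V → V → Prop) (hT : IsTournament D)
    (hdeg : Finset.univ.val.map (fun v : V => Nat.card {u : V // D v u}) = ({2, 2, 2, 0} : Multiset ℕ) ∨
            Finset.univ.val.map (fun v : V => Nat.card {u : V // D v u}) = ({3, 1, 1, 1} : Multiset ℕ)) :
    ¬ Cordial23 D := by
  classical
  rintro ⟨f, hfr, h1, h2, h3⟩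
  let e : V ≃ Fin 4 := Fintype.equivFinOfCardEq hV
  let g : Fin 4 → Fin 4 → Bool := fun i j => decide (D (e.symm i) (e.symm j))
  have hg : ∀ u v : V, D u v ↔ g (e u) (e v) = true := by
    intro u v; simp [g]
  have hloop : ∀ i, g i i = false := by
    intro i; simp only [g, decide_eq_false_iff_not]; exact hT.1 _
  have hanti : ∀ i j : Fin 4, i ≠ j → g i j = !g j i := by
    intro i j hij
    have huv : e.symm i ≠ e.symm j := fun h => hij (e.symm.injective h)
    have hiff := hT.2 _ _ huv
    by_cases hD : D (e.symm i) (e.symm j)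
    · have : ¬ D (e.symm j) (e.symm i) := hiff.mp hD
      simp [g, hD, this]
    · have : D (e.symm j) (e.symm i) := by
        by_contra h'
        exact hD (hiff.mpr h')
      simp [g, hD, this]
  have hdegv : ∀ v : V, Nat.card {u : V // D v u}
      = (Finset.univ.filter (fun j => g (e v) j = true)).card := by
    intro v
    rw [Nat.card_congr ((e.subtypeEquiv (fun u => hg v u)) :
      {u : V // D v u} ≃ {j : Fin 4 // g (e v) j = true})]
    rw [Nat.card_eq_fintype_card, Fintype.card_subtype]
  have hmap : Finset.univ.val.map (fun v : V => Nat.card {u : V // D v u})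
      = (Finset.univ.val : Multiset (Fin 4)).map
          (fun i => (Finset.univ.filter (fun j => g i j = true)).card) := by
    simp_rw [hdegv]
    conv_lhs => rw [← Finset.univ_map_equiv_to_embedding e.symm]
    simp only [Finset.map_val, Multiset.map_map, Function.comp_def,
      Equiv.coe_toEmbedding, Equiv.apply_symm_apply]
  have hcnt : ∀ k : Fin 2, Nat.card {v : V // f v = k}
      = (Finset.univ.filter (fun i : Fin 4 => f (e.symm i) = k)).card := by
    intro k
    rw [Nat.card_congr ((e.subtypeEquiv (fun v => by rw [e.symm_apply_apply])) :
      {v : V // f v = k} ≃ {i : Fin 4 // f (e.symm i) = k})]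
    rw [Nat.card_eq_fintype_card, Fintype.card_subtype]
  have harc : ∀ x : ℤ, arcCount D f x
      = (Finset.univ.filter (fun q : Fin 4 × Fin 4 =>
          g q.1 q.2 = true ∧ ((f (e.symm q.2)).val : ℤ) - ((f (e.symm q.1)).val : ℤ) = x)).card := by
    intro x
    unfold arcCount
    rw [Nat.card_congr (((Equiv.prodCongr e e).subtypeEquiv (fun p => by
      simp only [Equiv.prodCongr_apply, Prod.map_fst, Prod.map_snd, e.symm_apply_apply]
      rw [hg p.1 p.2])) :
      {p : V × V // D p.1 p.2 ∧ ((f p.2).val : ℤ) - ((f p.1).val : ℤ) = x} ≃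
      {q : Fin 4 × Fin 4 // g q.1 q.2 = true ∧
        ((f (e.symm q.2)).val : ℤ) - ((f (e.symm q.1)).val : ℤ) = x})]
    rw [Nat.card_eq_fintype_card, Fintype.card_subtype]
  obtain ⟨a, ha⟩ : ∃ a, g 0 1 = a := ⟨_, rfl⟩
  obtain ⟨b, hb⟩ : ∃ b, g 0 2 = b := ⟨_, rfl⟩
  obtain ⟨c, hc⟩ : ∃ c, g 0 3 = c := ⟨_, rfl⟩
  obtain ⟨d, hd⟩ : ∃ d, g 1 2 = d := ⟨_, rfl⟩
  obtain ⟨ee, he⟩ : ∃ ee, g 1 3 = ee := ⟨_, rfl⟩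
  obtain ⟨ff, hf⟩ : ∃ ff, g 2 3 = ff := ⟨_, rfl⟩
  obtain ⟨x0, hx0⟩ : ∃ x0, f (e.symm 0) = x0 := ⟨_, rfl⟩
  obtain ⟨x1, hx1⟩ : ∃ x1, f (e.symm 1) = x1 := ⟨_, rfl⟩
  obtain ⟨x2, hx2⟩ : ∃ x2, f (e.symm 2) = x2 := ⟨_, rfl⟩
  obtain ⟨x3, hx3⟩ : ∃ x3, f (e.symm 3) = x3 := ⟨_, rfl⟩
  have hG : ∀ i j, g i j = mkT a b c d ee ff i j := by
    intro i j
    fin_cases i <;> fin_cases j <;>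
      first
        | exact hloop _
        | exact ha | exact hb | exact hc | exact hd | exact he | exact hf
        | exact (hanti _ _ (by decide)).trans (congrArg (!·) ha)
        | exact (hanti _ _ (by decide)).trans (congrArg (!·) hb)
        | exact (hanti _ _ (by decide)).trans (congrArg (!·) hc)
        | exact (hanti _ _ (by decide)).trans (congrArg (!·) hd)
        | exact (hanti _ _ (by decide)).trans (congrArg (!·) he)
        | exact (hanti _ _ (by decide)).trans (congrArg (!·) hf)
  have hF : ∀ i : Fin 4, f (e.symm i) = ![x0, x1, x2, x3] i := by
    intro i
    fin_cases i
    · exact hx0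
    · exact hx1
    · exact hx2
    · exact hx3
  unfold Friendly at hfr
  rw [hcnt 0, hcnt 1] at hfr
  rw [harc 1, harc (-1)] at h1
  rw [harc 1, harc 0] at h2
  rw [harc (-1), harc 0] at h3
  rw [hmap] at hdeg
  simp only [hG] at h1 h2 h3 hdeg
  simp only [hF] at hfr h1 h2 h3
  exact key_s6 a b c d ee ff hdeg x0 x1 x2 x3 hfr ⟨h1, h2, h3⟩
end

section
/- For every n ≥ 6, no tournament on n vertices is (2,3)-cordial. -/
section Helpers

variable {V : Type*} [Fintype V]

lemma natCard_eq_filter (p : V → Prop) [DecidablePred p] :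
    Nat.card {v : V // p v} = (Finset.univ.filter p).card := by
  simp [Nat.card_eq_fintype_card, Fintype.card_subtype]

lemma card_iff (p q : V → Prop) (h : ∀ v, p v ↔ q v) :
    Nat.card {v : V // p v} = Nat.card {v : V // q v} :=
  Nat.card_congr (Equiv.subtypeEquivRight h)

lemma card_or (p q : V → Prop) (h : ∀ v, ¬ (p v ∧ q v)) :
    Nat.card {v : V // p v ∨ q v} = Nat.card {v : V // p v} + Nat.card {v : V // q v} := by
  classical
  rw [natCard_eq_filter, natCard_eq_filter, natCard_eq_filter, Finset.filter_or,
    Finset.card_union_of_disjoint (by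
      rw [Finset.disjoint_left]
      intro v hv hv'
      simp only [Finset.mem_filter, Finset.mem_univ, true_and] at hv hv'
      exact h v ⟨hv, hv'⟩)]

lemma card_compl (p : V → Prop) :
    Nat.card {v : V // p v} + Nat.card {v : V // ¬ p v} = Fintype.card V := by
  classical
  rw [natCard_eq_filter, natCard_eq_filter, ← Finset.card_univ]
  exact Finset.card_filter_add_card_filter_not p

lemma card_prodSub (p q : V → Prop) :
    Nat.card {x : V × V // p x.1 ∧ q x.2}
      = Nat.card {v : V // p v} * Nat.card {v : V // q v} := by
  rw [← Nat.card_prod]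
  exact Nat.card_congr
    ⟨fun x => (⟨x.1.1, x.2.1⟩, ⟨x.1.2, x.2.2⟩),
     fun y => ⟨(y.1.1, y.2.1), y.1.2, y.2.2⟩,
     fun x => rfl, fun y => rfl⟩

lemma double_count (D : V → V → Prop) (hT : IsTournament D)
    (Q : V × V → Prop) (hQ : ∀ p : V × V, Q p → Q p.swap) :
    Nat.card {p : V × V // p.1 ≠ p.2 ∧ Q p}
      = 2 * Nat.card {p : V × V // D p.1 p.2 ∧ Q p} := by
  classical
  rw [natCard_eq_filter, natCard_eq_filter]
  set F := Finset.univ.filter (fun p : V × V => D p.1 p.2 ∧ Q p) with hF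
  have hne : ∀ p : V × V, D p.1 p.2 → p.1 ≠ p.2 := by
    intro p h hpe
    exact hT.1 p.1 (by rw [hpe] at h ⊢; exact h)
  have himg : F.image Prod.swap = Finset.univ.filter (fun p : V × V => D p.2 p.1 ∧ Q p) := by
    ext p
    simp only [hF, Finset.mem_image, Finset.mem_filter, Finset.mem_univ, true_and]
    constructor
    · rintro ⟨q, ⟨hD, hQq⟩, rfl⟩; exact ⟨hD, hQ q hQq⟩
    · rintro ⟨hD, hQp⟩
      exact ⟨p.swap, ⟨hD, hQ p hQp⟩, Prod.swap_swap p⟩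
  have hunion : Finset.univ.filter (fun p : V × V => p.1 ≠ p.2 ∧ Q p)
      = F ∪ F.image Prod.swap := by
    rw [himg, hF, ← Finset.filter_or]
    apply Finset.filter_congr
    intro p _
    constructor
    · rintro ⟨hne', hQp⟩
      rcases Classical.em (D p.1 p.2) with h | h
      · exact Or.inl ⟨h, hQp⟩
      · exact Or.inr ⟨(hT.2 p.2 p.1 (Ne.symm hne')).mpr h, hQp⟩
    · rintro (⟨hD, hQp⟩ | ⟨hD, hQp⟩)
      · exact ⟨hne p hD, hQp⟩
      · exact ⟨(hne p.swap hD).symm, hQp⟩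
  have hdisj : Disjoint F (F.image Prod.swap) := by
    rw [himg, Finset.disjoint_left]
    intro p hp hp'
    simp only [hF, Finset.mem_filter, Finset.mem_univ, true_and] at hp hp'
    exact ((hT.2 p.1 p.2 (hne p hp.1)).mp hp.1) hp'.1
  rw [hunion, Finset.card_union_of_disjoint hdisj,
    Finset.card_image_of_injective _ Prod.swap_injective, two_mul]

lemma offdiag_card (p : V → Prop) :
    Nat.card {x : V × V // x.1 ≠ x.2 ∧ p x.1 ∧ p x.2} + Nat.card {v : V // p v}
      = Nat.card {v : V // p v} * Nat.card {v : V // p v} := by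
  classical
  rw [natCard_eq_filter, natCard_eq_filter]
  have key := Finset.card_filter_add_card_filter_not
    (s := Finset.univ.filter (fun x : V × V => p x.1 ∧ p x.2)) (p := fun x => x.1 = x.2)
  rw [Finset.filter_filter, Finset.filter_filter] at key
  have hdiag : (Finset.univ.filter (fun x : V × V => (p x.1 ∧ p x.2) ∧ x.1 = x.2)).card
      = (Finset.univ.filter p).card := by
    rw [show Finset.univ.filter (fun x : V × V => (p x.1 ∧ p x.2) ∧ x.1 = x.2)
        = (Finset.univ.filter p).image (fun v => (v, v)) by
      ext x
      simp only [Finset.mem_filter, Finset.mem_univ, true_and, Finset.mem_image]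
      constructor
      · rintro ⟨⟨h1, h2⟩, h3⟩
        exact ⟨x.1, h1, by rw [Prod.ext_iff]; exact ⟨rfl, h3⟩⟩
      · rintro ⟨v, hv, rfl⟩; exact ⟨⟨hv, hv⟩, rfl⟩]
    exact Finset.card_image_of_injective _ (fun u v h => (Prod.ext_iff.mp h).1)
  have hoff : Finset.univ.filter (fun x : V × V => (p x.1 ∧ p x.2) ∧ ¬ x.1 = x.2)
      = Finset.univ.filter (fun x : V × V => x.1 ≠ x.2 ∧ p x.1 ∧ p x.2) := by
    apply Finset.filter_congr; intro x _; tauto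
  rw [hdiag, hoff] at key
  rw [add_comm, key, ← Finset.card_product, ← Finset.filter_product,
    Finset.univ_product_univ]

lemma fin2_one_iff (x : Fin 2) : x = 1 ↔ ¬ x = 0 := by fin_cases x <;> simp

lemma fin2_mix (x y : Fin 2) : ((y.val : ℤ) - x.val = 1 ∨ (y.val : ℤ) - x.val = -1) ↔
    ((x = 0 ∧ y = 1) ∨ (x = 1 ∧ y = 0)) := by fin_cases x <;> fin_cases y <;> simp

lemma fin2_same (x y : Fin 2) : ((y.val : ℤ) - x.val = 0) ↔
    ((x = 0 ∧ y = 0) ∨ (x = 1 ∧ y = 1)) := by fin_cases x <;> fin_cases y <;> simp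

end Helpers

set_option maxHeartbeats 2000000

/-- For every n ≥ 6, no tournament on n vertices is (2,3)-cordial. -/
theorem big_tournament_not_cordial {V : Type*} [Fintype V] (n : ℕ) (hn : 6 ≤ n)
    (hV : Fintype.card V = n)
    (D : V → V → Prop) (hT : IsTournament D) : ¬ Cordial23 D := by
  rintro ⟨f, hf, h12, h10, h20⟩
  set a := Nat.card {v : V // f v = 0} with ha
  set b := Nat.card {v : V // f v = 1} with hb
  have hab : a + b = n := by
    rw [← hV, ← card_compl (fun v : V => f v = 0), ha, hb]
    congr 1
    exact card_iff _ _ (fun v => fin2_one_iff (f v))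
  have hfr : |(a : ℤ) - b| ≤ 1 := hf
  -- mixed arcs
  have hmix : 2 * (arcCount D f 1 + arcCount D f (-1)) = a * b + b * a := by
    have e0 : arcCount D f 1 + arcCount D f (-1)
        = Nat.card {p : V × V // D p.1 p.2 ∧
            (((f p.2).val : ℤ) - ((f p.1).val : ℤ) = 1 ∨
             ((f p.2).val : ℤ) - ((f p.1).val : ℤ) = -1)} := by
      rw [show arcCount D f 1 + arcCount D f (-1)
          = Nat.card {p : V × V // (D p.1 p.2 ∧ ((f p.2).val : ℤ) - ((f p.1).val : ℤ) = 1) ∨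
              (D p.1 p.2 ∧ ((f p.2).val : ℤ) - ((f p.1).val : ℤ) = -1)} from
        (card_or _ _ (by rintro p ⟨⟨_, h1⟩, _, h2⟩; omega)).symm]
      exact card_iff _ _ (fun p => by tauto)
    rw [e0, ← double_count D hT _ (by
      intro p hp
      simp only [Prod.snd_swap, Prod.fst_swap]
      omega)]
    rw [card_iff _ (fun p : V × V => (f p.1 = 0 ∧ f p.2 = 1) ∨ (f p.1 = 1 ∧ f p.2 = 0)) (by
      intro p
      rw [fin2_mix (f p.1) (f p.2)]
      constructor
      · exact fun h => h.2
      · intro h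
        refine ⟨fun hpe => ?_, h⟩
        rcases h with ⟨u, v⟩ | ⟨u, v⟩ <;> rw [hpe, v] at u <;> exact absurd u (by decide))]
    rw [card_or _ _ (by
      rintro p ⟨⟨h1, h2⟩, ⟨h3, h4⟩⟩
      rw [h1] at h3
      exact absurd h3 (by decide))]
    rw [card_prodSub (fun v : V => f v = 0) (fun v : V => f v = 1),
      card_prodSub (fun v : V => f v = 1) (fun v : V => f v = 0)]
  -- same-label arcs
  have hsame : 2 * arcCount D f 0 + (a + b) = a * a + b * b := by
    have e0 : arcCount D f 0 = Nat.card {p : V × V // D p.1 p.2 ∧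
        ((f p.2).val : ℤ) - ((f p.1).val : ℤ) = 0} := rfl
    rw [e0, ← double_count D hT _ (by
      intro p hp
      simp only [Prod.snd_swap, Prod.fst_swap]
      omega)]
    rw [card_iff _ (fun p : V × V => (p.1 ≠ p.2 ∧ f p.1 = 0 ∧ f p.2 = 0) ∨
        (p.1 ≠ p.2 ∧ f p.1 = 1 ∧ f p.2 = 1)) (by
      intro p
      rw [fin2_same (f p.1) (f p.2)]
      tauto)]
    rw [card_or _ _ (by
      rintro p ⟨⟨_, h1, _⟩, ⟨_, h3, _⟩⟩
      rw [h1] at h3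
      exact absurd h3 (by decide))]
    have o0 := offdiag_card (fun v : V => f v = 0)
    have o1 := offdiag_card (fun v : V => f v = 1)
    rw [← ha] at o0
    rw [← hb] at o1
    omega
  -- arithmetic endgame
  rw [abs_le] at hfr h12 h10 h20
  have hmix' : 2 * ((arcCount D f 1 : ℤ) + (arcCount D f (-1) : ℤ)) = a * b + b * a := by
    exact_mod_cast hmix
  have hsame' : 2 * (arcCount D f 0 : ℤ) + ((a : ℤ) + b) = a * a + b * b := by
    exact_mod_cast hsame
  have hab' : (a : ℤ) + b = n := by exact_mod_cast hab
  have hn' : (6 : ℤ) ≤ n := by exact_mod_cast hn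
  have hnn : (6 : ℤ) * n ≤ n * n := by nlinarith
  nlinarith [sq_nonneg ((a : ℤ) - b), h12.1, h12.2, h10.1, h10.2, h20.1, h20.2]
end

section
/- For every n ≥ 4, the cyclic-out orientation of the n-wheel (the orientation in which every spoke is directed away from the hub and the rim forms a directed cycle) is not (2,3)-cordial. -/
/-- The cyclic-out orientation of the n-wheel: hub is vertex n-1; every spoke is
directed from the hub to the rim, and the rim vertices 0,…,n-2 form a directed
cycle. -/
def wheelOut (n : ℕ) : Fin n → Fin n → Prop := fun u v =>
  (u.val = n - 1 ∧ v.val < n - 1) ∨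
  (u.val < n - 1 ∧ v.val < n - 1 ∧ (v.val = u.val + 1 ∨ (u.val = n - 2 ∧ v.val = 0)))

open Classical in
lemma sum_eq_card_sub {ι : Type*} (A : Finset ι) (g : ι → ℤ)
    (hg : ∀ p ∈ A, g p = 1 ∨ g p = -1 ∨ g p = 0) :
    ∑ p ∈ A, g p = ((A.filter (fun p => g p = 1)).card : ℤ)
      - ((A.filter (fun p => g p = -1)).card : ℤ) := by
  rw [Finset.card_filter, Finset.card_filter]
  push_cast
  rw [← Finset.sum_sub_distrib]
  refine Finset.sum_congr rfl fun p hp => ?_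
  rcases hg p hp with h | h | h <;> simp [h]

/-- For every n ≥ 4, the cyclic-out orientation of the n-wheel is not
(2,3)-cordial. -/
theorem wheelOut_not_cordial (n : ℕ) (hn : 4 ≤ n) : ¬ Cordial23 (wheelOut n) := by
  rintro ⟨f, hfr, hab, -, -⟩
  classical
  obtain ⟨m, rfl⟩ : ∃ m, n = m + 1 := ⟨n - 1, by omega⟩
  have hm : 3 ≤ m := by omega
  haveI : NeZero m := ⟨by omega⟩
  set g : Fin (m+1) × Fin (m+1) → ℤ :=
    fun p => ((f p.2).val : ℤ) - ((f p.1).val : ℤ) with hg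
  set A : Finset (Fin (m+1) × Fin (m+1)) :=
    Finset.univ.filter (fun p => wheelOut (m+1) p.1 p.2) with hA
  have hcount : ∀ x : ℤ, arcCount (wheelOut (m+1)) f x
      = (A.filter (fun p => g p = x)).card := by
    intro x
    rw [arcCount, Nat.card_eq_fintype_card, Fintype.card_subtype]
    congr 1
    rw [hA, Finset.filter_filter]
  have hdiff : (arcCount (wheelOut (m+1)) f 1 : ℤ)
      - (arcCount (wheelOut (m+1)) f (-1) : ℤ) = ∑ p ∈ A, g p := by
    rw [hcount, hcount, sum_eq_card_sub]
    intro p hp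
    have h2 := (f p.2).isLt
    have h1 := (f p.1).isLt
    simp only [hg]
    omega
  have h1v : (1 : Fin m).val = 1 := by
    rw [Fin.val_one']; exact Nat.mod_eq_of_lt (by omega)
  have key : ∀ i : Fin m, ∀ v : Fin (m+1),
      wheelOut (m+1) i.castSucc v ↔ v = (i+1).castSucc := by
    intro i v
    have hi := i.isLt
    have hv := v.isLt
    have hc : ((i+1 : Fin m)).val = (i.val + 1) % m := by
      rw [Fin.val_add, h1v]
    rcases Nat.lt_or_ge (i.val + 1) m with hlt | hge
    · have hw : (i.val + 1) % m = i.val + 1 := Nat.mod_eq_of_lt hlt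
      simp only [wheelOut, Fin.coe_castSucc, Fin.ext_iff, hc, hw]
      omega
    · have heq : i.val + 1 = m := by omega
      have hw : (i.val + 1) % m = 0 := by rw [heq, Nat.mod_self]
      simp only [wheelOut, Fin.coe_castSucc, Fin.ext_iff, hc, hw]
      omega
  have keyhub : ∀ v : Fin (m+1), wheelOut (m+1) (Fin.last m) v ↔ v.val < m := by
    intro v
    simp only [wheelOut, Fin.val_last]
    omega
  set S : ℤ := ∑ i : Fin m, ((f i.castSucc).val : ℤ) with hS
  set hb : ℤ := ((f (Fin.last m)).val : ℤ) with hhb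
  have hsum : ∑ p ∈ A, g p = S - m * hb := by
    rw [hA, Finset.sum_filter, Fintype.sum_prod_type, Fin.sum_univ_castSucc]
    have hrim : ∀ i : Fin m,
        (∑ v : Fin (m+1), if wheelOut (m+1) i.castSucc v then g (i.castSucc, v) else 0)
        = ((f (i+1).castSucc).val : ℤ) - ((f i.castSucc).val : ℤ) := by
      intro i
      have e : ∀ v : Fin (m+1),
          (if wheelOut (m+1) i.castSucc v then g (i.castSucc, v) else 0)
          = if v = (i+1).castSucc then g (i.castSucc, v) else 0 := fun v => by
        simp only [key i v]
      rw [Finset.sum_congr rfl (fun v _ => e v)]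
      simp [hg]
    have hhub : (∑ v : Fin (m+1),
        if wheelOut (m+1) (Fin.last m) v then g (Fin.last m, v) else 0)
        = S - m * hb := by
      have e : ∀ v : Fin (m+1),
          (if wheelOut (m+1) (Fin.last m) v then g (Fin.last m, v) else 0)
          = if v.val < m then ((f v).val : ℤ) - hb else 0 := fun v => by
        simp only [keyhub v, hg, hhb]
      rw [Finset.sum_congr rfl (fun v _ => e v), Fin.sum_univ_castSucc]
      have : ∀ i : Fin m, (if (i.castSucc : Fin (m+1)).val < m
          then ((f i.castSucc).val : ℤ) - hb else 0)
          = ((f i.castSucc).val : ℤ) - hb := fun i => by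
        simp [i.isLt]
      rw [Finset.sum_congr rfl (fun i _ => this i)]
      simp [Finset.sum_sub_distrib, hS, mul_comm]
    rw [Finset.sum_congr rfl (fun i _ => hrim i), hhub]
    have htel : ∑ i : Fin m,
        (((f (i+1).castSucc).val : ℤ) - ((f i.castSucc).val : ℤ)) = 0 := by
      rw [Finset.sum_sub_distrib]
      rw [Fintype.sum_equiv (Equiv.addRight (1 : Fin m))
        (fun i => ((f (i+1).castSucc).val : ℤ))
        (fun i => ((f i.castSucc).val : ℤ)) (fun i => rfl)]
      ring
    rw [htel]
    ring
  have hN1 : (Finset.univ.filter (fun v : Fin (m+1) => f v = 1)).card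
      = ∑ v : Fin (m+1), (f v).val := by
    rw [Finset.card_filter]
    exact Finset.sum_congr rfl fun v _ => by
      have h2 : ∀ a : Fin 2, (if a = 1 then 1 else 0) = a.val := by decide
      exact h2 (f v)
  have hcard1 : Nat.card {v : Fin (m+1) // f v = 1} = ∑ v : Fin (m+1), (f v).val := by
    rw [Nat.card_eq_fintype_card, Fintype.card_subtype, hN1]
  have hcard0 : Nat.card {v : Fin (m+1) // f v = 0}
      = (m+1) - ∑ v : Fin (m+1), (f v).val := by
    rw [Nat.card_eq_fintype_card, Fintype.card_subtype]
    have heqf : (Finset.univ.filter (fun v : Fin (m+1) => f v = 0))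
        = Finset.univ.filter (fun v => ¬ f v = 1) := by
      refine Finset.filter_congr fun v _ => ?_
      have h2 : ∀ a : Fin 2, (a = 0) ↔ ¬ a = 1 := by decide
      exact h2 (f v)
    rw [heqf]
    have hsplit := Finset.card_filter_add_card_filter_not
      (s := (Finset.univ : Finset (Fin (m+1)))) (p := fun v : Fin (m+1) => f v = 1)
    have hu : (Finset.univ : Finset (Fin (m+1))).card = m + 1 := by simp
    omega
  have hNle : ∑ v : Fin (m+1), (f v).val ≤ m + 1 := by
    calc ∑ v : Fin (m+1), (f v).val ≤ ∑ _v : Fin (m+1), 1 :=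
          Finset.sum_le_sum fun v _ => by have := (f v).isLt; omega
      _ = m + 1 := by simp
  have hStot : ((∑ v : Fin (m+1), (f v).val : ℕ) : ℤ) = S + hb := by
    push_cast
    rw [Fin.sum_univ_castSucc]
  have hS0 : 0 ≤ S := Finset.sum_nonneg fun i _ => by positivity
  rw [hdiff, hsum] at hab
  rw [Friendly, hcard0, hcard1] at hfr
  rw [abs_le] at hab hfr
  have hb2 : hb = 0 ∨ hb = 1 := by
    have := (f (Fin.last m)).isLt
    omega
  rcases hb2 with h | h <;> rw [h] at hab <;> simp only [mul_zero, mul_one, sub_zero] at hab <;> omega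
end

section
/- For n ≥ 4, the n-wheel W_n is not (2,3)-orientable if and only if n is even, 4 does not divide n, and 3 divides 2n − 2 (equivalently, n ≡ 2 (mod 4) and n ≡ 1 (mod 3)). -/
/-- An undirected simple graph is (2,3)-orientable if some orientation of it is
(2,3)-cordial. -/
def Orientable23 {V : Type*} (G : SimpleGraph V) : Prop :=
  ∃ D : V → V → Prop, (∀ u v : V, D u v → G.Adj u v) ∧
    (∀ u v : V, G.Adj u v → (D u v ↔ ¬ D v u)) ∧ Cordial23 D

/-- The n-wheel graph: hub is vertex n-1, adjacent to all rim vertices 0,…,n-2,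
which form a cycle. -/
def wheelGraph (n : ℕ) : SimpleGraph (Fin n) :=
  SimpleGraph.fromRel (fun u v => u.val = n - 1 ∨ (u.val + 1) % (n - 1) = v.val)

/-!
Once a friendly labelling `f` is fixed, an orientation only decides how the edges whose ends get
different labels (the cut edges) split between the arc labels `1` and `-1`, and every split is
realised by some orientation; the other edges always get `0`. Hence a graph is (2,3)-orientable iff
some friendly labelling has its number of cut edges within `2` of twice the number of uncut ones.

On the wheel with `N` rim vertices, a labelling with `s` rim vertices labelled differently from the
hub and `r` label changes around the rim has `s + r` cut edges among `2N`, and the condition reads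
`|4N - 3(s + r)| ≤ 2`. The number `r` is even, and when `N + 1` is even friendliness forces
`2s = N + 1`; together these rule out exactly `N ≡ 9 (mod 12)`. For every other `N` a rim labelling
with suitable `s` and `r = 2e` is written down explicitly.
-/

open Finset

section Orientation

variable {V : Type*}

theorem Nat.card_or_swap_of_asymm [Finite V] {R : V → V → Prop}
    (hR : ∀ u v, R u v → ¬ R v u) :
    Nat.card {p : V × V // R p.1 p.2 ∨ R p.2 p.1} = 2 * Nat.card {p : V × V // R p.1 p.2} := by
  classical
  rw [Nat.card_congr (subtypeOrEquiv _ _ fun _ h₁ h₂ p hp => hR _ _ (h₁ p hp) (h₂ p hp)),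
    Nat.card_sum, two_mul]
  congr 1
  exact Nat.card_congr ((Equiv.prodComm V V).subtypeEquiv fun _ => Iff.rfl)

def SimpleGraph.IsOrientation (G : SimpleGraph V) (D : V → V → Prop) : Prop :=
  (∀ u v, D u v → G.Adj u v) ∧ ∀ u v, G.Adj u v → (D u v ↔ ¬ D v u)

theorem orientable23_iff_exists_isOrientation (G : SimpleGraph V) :
    Orientable23 G ↔ ∃ D, G.IsOrientation D ∧ Cordial23 D := by
  simp only [Orientable23, SimpleGraph.IsOrientation, and_assoc]

theorem SimpleGraph.IsOrientation.two_mul_card [Finite V] {G : SimpleGraph V}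
    {D : V → V → Prop} (hD : G.IsOrientation D) {P : V → V → Prop}
    (hP : ∀ u v, P u v → P v u) :
    2 * Nat.card {p : V × V // D p.1 p.2 ∧ P p.1 p.2} =
      Nat.card {p : V × V // G.Adj p.1 p.2 ∧ P p.1 p.2} := by
  rw [← Nat.card_or_swap_of_asymm (R := fun u v => D u v ∧ P u v)
    fun u v h h' => (hD.2 u v (hD.1 u v h.1)).1 h.1 h'.1]
  refine Nat.card_congr (Equiv.subtypeEquivRight fun p => ?_)
  constructor
  · rintro (⟨h, hp⟩ | ⟨h, hp⟩)
    · exact ⟨hD.1 _ _ h, hp⟩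
    · exact ⟨(hD.1 _ _ h).symm, hP _ _ hp⟩
  · rintro ⟨h, hp⟩
    by_cases hd : D p.1 p.2
    · exact Or.inl ⟨hd, hp⟩
    · exact Or.inr ⟨by simpa [hd] using (hD.2 _ _ h).not, hP _ _ hp⟩

theorem fin_two_sub_eq_zero_iff (x y : Fin 2) : ((y : ℤ) - x = 0 ↔ x = y) := by
  decide +revert

theorem fin_two_sub_eq_one_iff (x y : Fin 2) : ((y : ℤ) - x = 1 ↔ x = 0 ∧ y = 1) := by
  decide +revert

theorem fin_two_sub_eq_one_or_eq_neg_one_iff (x y : Fin 2) :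
    ((y : ℤ) - x = 1 ∨ (y : ℤ) - x = -1 ↔ x ≠ y) := by
  decide +revert

theorem fin_two_ne_iff (x y : Fin 2) : x ≠ y ↔ (x = 0 ∧ y = 1) ∨ (y = 0 ∧ x = 1) := by
  decide +revert

variable (D : V → V → Prop) (f : V → Fin 2)

theorem arcCount_zero : arcCount D f 0 = Nat.card {p : V × V // D p.1 p.2 ∧ f p.1 = f p.2} :=
  Nat.card_congr (Equiv.subtypeEquivRight fun _ => and_congr_right' (fin_two_sub_eq_zero_iff ..))

theorem arcCount_one :
    arcCount D f 1 = Nat.card {p : V × V // D p.1 p.2 ∧ f p.1 = 0 ∧ f p.2 = 1} :=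
  Nat.card_congr (Equiv.subtypeEquivRight fun _ => and_congr_right' (fin_two_sub_eq_one_iff ..))

theorem arcCount_one_add_arcCount_neg_one [Finite V] :
    arcCount D f 1 + arcCount D f (-1) =
      Nat.card {p : V × V // D p.1 p.2 ∧ f p.1 ≠ f p.2} := by
  classical
  have hdisj : Disjoint (fun p : V × V => D p.1 p.2 ∧ (f p.2 : ℤ) - (f p.1 : ℤ) = 1)
      (fun p => D p.1 p.2 ∧ (f p.2 : ℤ) - (f p.1 : ℤ) = -1) :=
    fun _ h₁ h₂ p hp => by have := (h₁ p hp).2.symm.trans (h₂ p hp).2; omega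
  rw [arcCount, arcCount, ← Nat.card_sum, ← Nat.card_congr (subtypeOrEquiv _ _ hdisj)]
  exact Nat.card_congr (Equiv.subtypeEquivRight fun p => by
    rw [← and_or_left, fin_two_sub_eq_one_or_eq_neg_one_iff])

theorem exists_isOrientation_arcCount_one [Finite V] (G : SimpleGraph V) {α : ℕ}
    (hα : α ≤ Nat.card {p : V × V // G.Adj p.1 p.2 ∧ f p.1 = 0 ∧ f p.2 = 1}) :
    ∃ D, G.IsOrientation D ∧ arcCount D f 1 = α := by
  classical
  have := Fintype.ofFinite V
  let _ : LinearOrder V := IsWellOrder.linearOrder WellOrderingRel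
  rw [Nat.card_eq_fintype_card, Fintype.card_subtype] at hα
  obtain ⟨S, hSX, rfl⟩ := Finset.exists_subset_card_eq hα
  have hS : ∀ {u v}, (u, v) ∈ S → G.Adj u v ∧ f u = 0 ∧ f v = 1 := fun h => by
    simpa using hSX h
  -- The cut edges in `S` point from `0` to `1`, the other cut edges from `1` to `0`.
  refine ⟨fun u v => G.Adj u v ∧
    if f u = f v then u < v else (f u = 0 ↔ (u, v) ∈ S ∨ (v, u) ∈ S), ⟨fun _ _ h => h.1, ?_⟩, ?_⟩
  · intro u v h
    by_cases huv : f u = f v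
    · simp only [h, h.symm, huv, if_true, true_and, not_lt]
      exact ⟨le_of_lt, fun h' => lt_of_le_of_ne h' h.ne⟩
    · rcases (fin_two_ne_iff _ _).1 huv with ⟨hu, hv⟩ | ⟨hv, hu⟩ <;>
        simp [h, h.symm, hu, hv] <;> tauto
  · rw [arcCount_one, ← Nat.card_eq_finsetCard]
    refine Nat.card_congr (Equiv.subtypeEquivRight fun p => ⟨?_, fun hp => ?_⟩)
    · rintro ⟨⟨-, hD⟩, h0, h1⟩
      rw [h0, h1, if_neg (by decide)] at hD
      exact (hD.1 rfl).resolve_right fun h => by simpa [h0] using (hS h).2.2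
    · obtain ⟨h, h0, h1⟩ := hS hp
      exact ⟨⟨h, by simp [h0, h1, hp]⟩, h0, h1⟩

-- Ordered pairs count every edge twice.
theorem orientable23_iff [Finite V] (G : SimpleGraph V) :
    Orientable23 G ↔ ∃ f : V → Fin 2, Friendly f ∧
      |2 * (Nat.card {p : V × V // G.Adj p.1 p.2 ∧ f p.1 = f p.2} : ℤ) -
        Nat.card {p : V × V // G.Adj p.1 p.2 ∧ f p.1 ≠ f p.2}| ≤ 4 := by
  have hcount : ∀ {D} (f : V → Fin 2), G.IsOrientation D →
      2 * arcCount D f 0 = Nat.card {p : V × V // G.Adj p.1 p.2 ∧ f p.1 = f p.2} ∧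
      2 * (arcCount D f 1 + arcCount D f (-1)) =
        Nat.card {p : V × V // G.Adj p.1 p.2 ∧ f p.1 ≠ f p.2} := fun f hD => by
    rw [arcCount_zero, arcCount_one_add_arcCount_neg_one]
    exact ⟨hD.two_mul_card (P := fun u v => f u = f v) fun _ _ => Eq.symm,
      hD.two_mul_card (P := fun u v => f u ≠ f v) fun _ _ => Ne.symm⟩
  rw [orientable23_iff_exists_isOrientation]
  constructor
  · rintro ⟨D, hD, f, hf, h1, h2, h3⟩
    refine ⟨f, hf, ?_⟩
    obtain ⟨hsame, hcut⟩ := hcount f hD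
    rw [← hsame, ← hcut]
    simp only [abs_le] at h1 h2 h3 ⊢
    push_cast
    omega
  · rintro ⟨f, hf, hbal⟩
    have hcut : Nat.card {p : V × V // G.Adj p.1 p.2 ∧ f p.1 ≠ f p.2} =
        2 * Nat.card {p : V × V // G.Adj p.1 p.2 ∧ f p.1 = 0 ∧ f p.2 = 1} := by
      rw [← Nat.card_or_swap_of_asymm (R := fun u v => G.Adj u v ∧ f u = 0 ∧ f v = 1)
        fun u v h h' => by simp [h.2.1] at h']
      exact Nat.card_congr (Equiv.subtypeEquivRight fun p => by
        simp only [fin_two_ne_iff, G.adj_comm p.2 p.1]; tauto)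
    obtain ⟨D, hD, hα⟩ := exists_isOrientation_arcCount_one f G (Nat.div_le_self _ 2)
    obtain ⟨hsame, hcut'⟩ := hcount f hD
    rw [← hsame, hcut] at hbal
    rw [hcut] at hcut'
    rw [abs_le] at hbal
    refine ⟨D, hD, f, hf, ?_, ?_, ?_⟩ <;> rw [abs_le] <;> omega

end Orientation

section Wheel

variable {N : ℕ}

theorem Nat.add_one_mod_of_lt {k n : ℕ} (h : k < n) :
    (k + 1) % n = if k + 1 = n then 0 else k + 1 := by
  split_ifs with h'
  · rw [h', Nat.mod_self]
  · exact Nat.mod_eq_of_lt (by omega)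

theorem Fin.val_finRotate (j : Fin N) : (finRotate N j : ℕ) = (j + 1) % N := by
  rcases N with _ | M
  · exact j.elim0
  · rw [coe_finRotate, Nat.add_one_mod_of_lt j.isLt]
    simp [Fin.ext_iff]

theorem finRotate_finRotate_ne (hN : 3 ≤ N) (j : Fin N) : finRotate N (finRotate N j) ≠ j := by
  have := j.isLt
  rw [ne_eq, Fin.ext_iff, Fin.val_finRotate, Fin.val_finRotate, Nat.add_one_mod_of_lt this,
    Nat.add_one_mod_of_lt (by split_ifs <;> omega)]
  split_ifs <;> omega

theorem wheelGraph_adj_castSucc (hN : 2 ≤ N) (i j : Fin N) :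
    (wheelGraph (N + 1)).Adj i.castSucc j.castSucc ↔ finRotate N i = j ∨ finRotate N j = i := by
  have hi := i.isLt
  have hj := j.isLt
  simp only [wheelGraph, SimpleGraph.fromRel_adj, Fin.ext_iff, Fin.val_finRotate,
    Fin.val_castSucc, Nat.add_sub_cancel, ne_eq, Nat.add_one_mod_of_lt hi, Nat.add_one_mod_of_lt hj]
  split_ifs <;> omega

theorem wheelGraph_adj_last (j : Fin N) : (wheelGraph (N + 1)).Adj (Fin.last N) j.castSucc := by
  simpa [wheelGraph, Fin.ext_iff] using j.isLt.ne'

def wheelArc : Fin N ⊕ Fin N → Fin (N + 1) × Fin (N + 1) :=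
  Sum.elim (fun j => (Fin.last N, j.castSucc)) fun j => (j.castSucc, (finRotate N j).castSucc)

theorem wheelArc_injective : Function.Injective (wheelArc (N := N)) := by
  rintro (i | i) (j | j) h <;> simp only [wheelArc, Sum.elim_inl, Sum.elim_inr, Prod.mk.injEq,
    Fin.castSucc_inj] at h
  · rw [h.2]
  · exact absurd h.1.symm (Fin.castSucc_ne_last j)
  · exact absurd h.1 (Fin.castSucc_ne_last i)
  · rw [h.1]

theorem wheelGraph_adj_iff (hN : 2 ≤ N) (u v : Fin (N + 1)) :
    (wheelGraph (N + 1)).Adj u v ↔ (u, v) ∈ Set.range wheelArc ∨ (v, u) ∈ Set.range wheelArc := by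
  rcases u.eq_castSucc_or_eq_last with ⟨i, rfl⟩ | rfl <;>
    rcases v.eq_castSucc_or_eq_last with ⟨j, rfl⟩ | rfl <;>
    simp [wheelArc, wheelGraph_adj_castSucc hN, wheelGraph_adj_last,
      (wheelGraph_adj_last _).symm, fun j => (Fin.castSucc_ne_last j).symm, -finRotate_apply]

theorem wheelArc_asymm (hN : 3 ≤ N) (u v : Fin (N + 1)) :
    (u, v) ∈ Set.range wheelArc → (v, u) ∉ Set.range wheelArc := by
  rintro ⟨i | i, hi⟩ ⟨j | j, hj⟩ <;> simp only [wheelArc, Sum.elim_inl, Sum.elim_inr,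
    Prod.mk.injEq] at hi hj <;> obtain ⟨rfl, rfl⟩ := hi
  · exact Fin.castSucc_ne_last _ hj.2
  · exact Fin.castSucc_ne_last _ hj.2
  · exact Fin.castSucc_ne_last _ hj.1.symm
  · obtain ⟨rfl⟩ := Fin.castSucc_inj.1 hj.1
    exact finRotate_finRotate_ne hN i (Fin.castSucc_inj.1 hj.2)

theorem card_wheelArc (Q : Fin (N + 1) × Fin (N + 1) → Prop) [DecidablePred Q] :
    Nat.card {p // p ∈ Set.range wheelArc ∧ Q p} =
      #{j : Fin N | Q (Fin.last N, j.castSucc)} +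
        #{j : Fin N | Q (j.castSucc, (finRotate N j).castSucc)} := by
  rw [← Nat.card_congr ((Equiv.subtypeEquiv (Equiv.ofInjective _ wheelArc_injective)
    fun _ => Iff.rfl).trans (Equiv.subtypeSubtypeEquivSubtypeInter _ Q)),
    Nat.card_congr Equiv.subtypeSum, Nat.card_sum, Nat.card_eq_fintype_card,
    Nat.card_eq_fintype_card, Fintype.card_subtype, Fintype.card_subtype]
  rfl

theorem card_wheelGraph_adj (hN : 3 ≤ N) (P : Fin (N + 1) → Fin (N + 1) → Prop) [DecidableRel P]
    (hP : ∀ u v, P u v → P v u) :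
    Nat.card {p : Fin (N + 1) × Fin (N + 1) // (wheelGraph (N + 1)).Adj p.1 p.2 ∧ P p.1 p.2} =
      2 * (#{j : Fin N | P (Fin.last N) j.castSucc} +
        #{j : Fin N | P j.castSucc (finRotate N j).castSucc}) := by
  rw [← card_wheelArc fun p => P p.1 p.2, ← Nat.card_or_swap_of_asymm
    (R := fun u v => (u, v) ∈ Set.range wheelArc ∧ P u v)
    fun u v h h' => wheelArc_asymm hN u v h.1 h'.1]
  refine Nat.card_congr (Equiv.subtypeEquivRight fun p => ?_)
  rw [wheelGraph_adj_iff (by omega)]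
  constructor
  · rintro ⟨h | h, hp⟩
    · exact Or.inl ⟨h, hp⟩
    · exact Or.inr ⟨h, hP _ _ hp⟩
  · rintro (⟨h, hp⟩ | ⟨h, hp⟩)
    · exact ⟨Or.inl h, hp⟩
    · exact ⟨Or.inr h, hP _ _ hp⟩

theorem even_card_ne_comp_perm {ι : Type*} [Fintype ι] (σ : Equiv.Perm ι) (g : ι → ZMod 2) :
    Even #{i | g i ≠ g (σ i)} := by
  have hind : ∀ a b : ZMod 2, (if a ≠ b then 1 else 0 : ZMod 2) = a + b := by decide
  rw [← ZMod.natCast_eq_zero_iff_even, natCast_card_filter]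
  simp only [hind, sum_add_distrib, Equiv.sum_comp, ← two_mul]
  exact zero_mul _

variable (f : Fin (N + 1) → Fin 2)

def spokeCut : ℕ := #{j : Fin N | f (Fin.last N) ≠ f j.castSucc}

def rimCut : ℕ := #{j : Fin N | f j.castSucc ≠ f (finRotate N j).castSucc}

theorem even_rimCut : Even (rimCut f) :=
  even_card_ne_comp_perm (finRotate N) fun j => f j.castSucc

theorem friendly_iff_spokeCut : Friendly f ↔ |(N + 1 : ℤ) - 2 * spokeCut f| ≤ 1 := by
  have hone : ∀ x : Fin 2, x = 1 ↔ x ≠ 0 := by decide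
  have hspoke : #{v | f (Fin.last N) ≠ f v} = spokeCut f := by
    rw [spokeCut, card_filter, card_filter, Fin.sum_univ_castSucc, if_neg (not_not.2 rfl),
      add_zero]
  have htot := card_filter_add_card_filter_not (s := univ) fun v => f v = 0
  rw [card_univ, Fintype.card_fin] at htot
  rw [Friendly, Nat.card_eq_fintype_card, Nat.card_eq_fintype_card, Fintype.card_subtype,
    Fintype.card_subtype, abs_le, abs_le]
  simp only [hone, ne_eq]
  obtain h | h : f (Fin.last N) = 0 ∨ f (Fin.last N) = 1 :=
    (by decide : ∀ x : Fin 2, x = 0 ∨ x = 1) _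
  · simp only [h, ne_comm (a := (0 : Fin 2)), ne_eq] at hspoke
    omega
  · simp only [h, ne_comm (a := (1 : Fin 2)), hone, ne_eq, not_not] at hspoke
    omega

theorem orientable23_wheelGraph_iff (hN : 3 ≤ N) :
    Orientable23 (wheelGraph (N + 1)) ↔ ∃ f : Fin (N + 1) → Fin 2,
      |(N + 1 : ℤ) - 2 * spokeCut f| ≤ 1 ∧ |(4 * N : ℤ) - 3 * (spokeCut f + rimCut f)| ≤ 2 := by
  rw [orientable23_iff]
  refine exists_congr fun f => and_congr (friendly_iff_spokeCut f) ?_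
  rw [card_wheelGraph_adj hN (fun u v => f u = f v) fun _ _ => Eq.symm,
    card_wheelGraph_adj hN (fun u v => f u ≠ f v) fun _ _ => Ne.symm]
  have hs := card_filter_add_card_filter_not (s := univ)
    fun j : Fin N => f (Fin.last N) = f j.castSucc
  have hr := card_filter_add_card_filter_not (s := univ)
    fun j : Fin N => f j.castSucc = f (finRotate N j).castSucc
  rw [card_univ, Fintype.card_fin] at hs hr
  rw [spokeCut, rimCut, abs_le, abs_le]
  simp only [ne_eq]
  push_cast
  omega

theorem Fin.card_filter_univ_val (P : ℕ → Prop) [DecidablePred P] :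
    #{j : Fin N | P j} = #{i ∈ range N | P i} := by
  rw [← Nat.Iio_eq_range, ← Fin.map_valEmbedding_univ, filter_map, card_map]
  rfl

/-- For `1 ≤ e ≤ s` and `s + e ≤ N`: `s` ones on the rim, in the `e` runs `{1}, {3}, …, {2e - 3}`
and `{2e - 1, …, s + e - 1}`, so `2e` label changes around the rim; the hub gets `0`. -/
def wheelLabelling (s e : ℕ) : Fin (N + 1) → Fin 2 :=
  fun v => if (v : ℕ) < s + e ∧ (2 * e ≤ v ∨ 2 ∣ (v : ℕ) + 1) then 1 else 0

variable {s e : ℕ}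

theorem spokeCut_wheelLabelling (hes : e ≤ s) (hse : s + e ≤ N) :
    spokeCut (wheelLabelling (N := N) s e) = s := by
  have hcut : ∀ j : Fin N, wheelLabelling s e (Fin.last N) ≠ wheelLabelling s e j.castSucc ↔
      (j : ℕ) < s + e ∧ (2 * e ≤ j ∨ 2 ∣ (j : ℕ) + 1) := by
    intro j
    have := j.isLt
    simp only [wheelLabelling, Fin.val_last, Fin.val_castSucc]
    split_ifs <;> simp_all <;> omega
  have hsplit : {i ∈ range N | i < s + e ∧ (2 * e ≤ i ∨ 2 ∣ i + 1)} =
      {i ∈ range (2 * e) | 2 ∣ i + 1} ∪ Ico (2 * e) (s + e) := by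
    ext i
    simp only [mem_filter, mem_range, mem_union, mem_Ico]
    omega
  have hdisj : Disjoint {i ∈ range (2 * e) | 2 ∣ i + 1} (Ico (2 * e) (s + e)) :=
    disjoint_left.2 fun i hi hi' => by simp only [mem_filter, mem_range, mem_Ico] at hi hi'; omega
  rw [spokeCut, filter_congr fun j _ => hcut j, Fin.card_filter_univ_val
    (fun i => i < s + e ∧ (2 * e ≤ i ∨ 2 ∣ i + 1)), hsplit, card_union_of_disjoint hdisj,
    Nat.card_multiples, Nat.card_Ico]
  omega

theorem rimCut_wheelLabelling (he : 1 ≤ e) (hes : e ≤ s) (hse : s + e ≤ N) :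
    rimCut (wheelLabelling (N := N) s e) = 2 * e := by
  have hcut : ∀ j : Fin N, wheelLabelling s e j.castSucc ≠
      wheelLabelling s e (finRotate N j).castSucc ↔ (j : ℕ) + 1 < 2 * e ∨ (j : ℕ) = s + e - 1 := by
    intro j
    have := j.isLt
    simp only [wheelLabelling, Fin.val_castSucc, Fin.val_finRotate, Nat.add_one_mod_of_lt this]
    split_ifs <;> simp_all <;> omega
  have hchanges : {i ∈ range N | i + 1 < 2 * e ∨ i = s + e - 1} =
      insert (s + e - 1) (range (2 * e - 1)) := by
    ext i
    simp only [mem_filter, mem_range, mem_insert]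
    omega
  rw [rimCut, filter_congr fun j _ => hcut j, Fin.card_filter_univ_val
    (fun i => i + 1 < 2 * e ∨ i = s + e - 1), hchanges,
    card_insert_of_notMem (by simp only [mem_range]; omega), card_range]
  omega

theorem orientable23_wheelGraph (hN : 3 ≤ N) (h9 : N % 12 ≠ 9) :
    Orientable23 (wheelGraph (N + 1)) := by
  obtain ⟨s, hs⟩ : ∃ s, s = (N + 1) / 2 + if N % 12 = 6 then 1 else 0 := ⟨_, rfl⟩
  -- `6e` is the multiple of `6` nearest to `4N - 3s`; it is close enough unless `N ≡ 9 (mod 12)`,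
  -- and for `N ≡ 6 (mod 12)` only the friendly value `s = N / 2 + 1` works.
  obtain ⟨e, he⟩ : ∃ e, e = (4 * N - 3 * s + 2) / 6 := ⟨_, rfl⟩
  have hse : 1 ≤ e ∧ e ≤ s ∧ s + e ≤ N := by split_ifs at hs <;> omega
  refine (orientable23_wheelGraph_iff hN).2 ⟨wheelLabelling s e, ?_⟩
  rw [spokeCut_wheelLabelling hse.2.1 hse.2.2, rimCut_wheelLabelling hse.1 hse.2.1 hse.2.2,
    abs_le, abs_le]
  push_cast
  split_ifs at hs <;> omega

theorem not_orientable23_wheelGraph (hN : 3 ≤ N) (h9 : N % 12 = 9) :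
    ¬ Orientable23 (wheelGraph (N + 1)) := by
  rw [orientable23_wheelGraph_iff hN]
  rintro ⟨f, hspoke, hbal⟩
  obtain ⟨r, hr⟩ := even_rimCut f
  rw [abs_le] at hspoke hbal
  omega

end Wheel

/-- For n ≥ 4, the n-wheel is not (2,3)-orientable if and only if n is even, 4 does
not divide n, and 3 divides 2n - 2. -/
theorem wheel_not_orientable_iff (n : ℕ) (hn : 4 ≤ n) :
    ¬ Orientable23 (wheelGraph n) ↔ (Even n ∧ ¬ (4 ∣ n) ∧ 3 ∣ (2 * n - 2)) := by
  obtain ⟨N, rfl⟩ : ∃ N, n = N + 1 := ⟨n - 1, by omega⟩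
  have hN : 3 ≤ N := by omega
  have hmod : (Even (N + 1) ∧ ¬ 4 ∣ N + 1 ∧ 3 ∣ 2 * (N + 1) - 2) ↔ N % 12 = 9 := by
    rw [Nat.even_iff]
    omega
  rw [hmod]
  exact ⟨fun h => by_contra fun h9 => h (orientable23_wheelGraph hN h9),
    not_orientable23_wheelGraph hN⟩
end

section
/- Let n satisfy 2n − 3 = 3z + 2, n = 2k and k = 2ℓ + 1 for some integers z, k, ℓ (equivalently n ≡ 2 (mod 4) and n ≡ 1 (mod 3)). Then the n-fan F_n has an orientation that is (2,3)-cordial. -/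
/-- The n-fan graph on vertices 0,…,n-1: the central vertex 0 is adjacent to all
other vertices, and the vertices 1,…,n-1 form a path. -/
def fanGraph (n : ℕ) : SimpleGraph (Fin n) :=
  SimpleGraph.fromRel (fun u v => u.val = 0 ∨ (1 ≤ u.val ∧ v.val = u.val + 1))

/-! ### Auxiliary constructions for the fan theorem -/

/-- Counting members of an arithmetic progression (step 4) below `N`. -/
lemma count_prog4 (a b : ℕ) (hm : a % 4 = b % 4) (hab : a ≤ b) :
    ∀ N, ((Finset.range N).filter (fun i => i % 4 = a % 4 ∧ a ≤ i ∧ i < b)).card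
      = (N+3-a)/4 - (N+3-b)/4 := by
  intro N
  induction N with
  | zero => rw [Finset.range_zero, Finset.filter_empty, Finset.card_empty]; omega
  | succ k ih =>
    rw [Finset.range_add_one, Finset.filter_insert]
    by_cases h : k % 4 = a % 4 ∧ a ≤ k ∧ k < b
    · rw [if_pos h, Finset.card_insert_of_notMem (by simp), ih]; omega
    · rw [if_neg h, ih]; omega

/-- Counting members of an arithmetic progression (step 2) below `N`. -/
lemma count_prog2 (a b : ℕ) (hm : a % 2 = b % 2) (hab : a ≤ b) :
    ∀ N, ((Finset.range N).filter (fun i => i % 2 = a % 2 ∧ a ≤ i ∧ i < b)).card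
      = (N+1-a)/2 - (N+1-b)/2 := by
  intro N
  induction N with
  | zero => rw [Finset.range_zero, Finset.filter_empty, Finset.card_empty]; omega
  | succ k ih =>
    rw [Finset.range_add_one, Finset.filter_insert]
    by_cases h : k % 2 = a % 2 ∧ a ≤ k ∧ k < b
    · rw [if_pos h, Finset.card_insert_of_notMem (by simp), ih]; omega
    · rw [if_neg h, ih]; omega

/-- Counting members of an interval below `N`. -/
lemma count_ival (a b : ℕ) (hab : a ≤ b) :
    ∀ N, ((Finset.range N).filter (fun i => a ≤ i ∧ i < b)).card = (N - a) - (N - b) := by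
  intro N
  induction N with
  | zero => rw [Finset.range_zero, Finset.filter_empty, Finset.card_empty]; omega
  | succ k ih =>
    rw [Finset.range_add_one, Finset.filter_insert]
    by_cases h : a ≤ k ∧ k < b
    · rw [if_pos h, Finset.card_insert_of_notMem (by simp), ih]; omega
    · rw [if_neg h, ih]; omega

/-- Cardinality of a filter of a disjoint disjunction. -/
lemma card_filter_or {p q : ℕ → Prop} [DecidablePred p] [DecidablePred q] {s : Finset ℕ}
    (h : ∀ i ∈ s, ¬(p i ∧ q i)) :
    (s.filter (fun i => p i ∨ q i)).card = (s.filter p).card + (s.filter q).card := by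
  rw [Finset.filter_or]
  exact Finset.card_union_of_disjoint (Finset.disjoint_left.mpr fun a ha hb => by
    rw [Finset.mem_filter] at ha hb
    exact h a ha.1 ⟨ha.2, hb.2⟩)


lemma ite_sub_eq_one (A B : Prop) [Decidable A] [Decidable B] :
    ((if A then (1:ℤ) else 0) - (if B then (1:ℤ) else 0) = 1) ↔ (A ∧ ¬B) := by
  split_ifs <;> simp [*]

lemma ite_sub_eq_negone (A B : Prop) [Decidable A] [Decidable B] :
    ((if A then (1:ℤ) else 0) - (if B then (1:ℤ) else 0) = -1) ↔ (¬A ∧ B) := by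
  split_ifs <;> simp [*]

lemma ite_sub_eq_zero (A B : Prop) [Decidable A] [Decidable B] :
    ((if A then (1:ℤ) else 0) - (if B then (1:ℤ) else 0) = 0) ↔ (A ↔ B) := by
  split_ifs <;> simp [*]

/-- The friendly labelling used for the fan of order `12m+10`. -/
def fanF (m : ℕ) (v : Fin (12*m+10)) : Fin 2 :=
  if (v.val ≤ 4*m+3 ∧ (v.val % 4 = 1 ∨ v.val % 4 = 2)) ∨ (4*m+4 ≤ v.val ∧ v.val % 2 = 0)
  then 1 else 0

/-- The orientation of the fan of order `12m+10`. -/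
def fanD (m : ℕ) (u v : Fin (12*m+10)) : Prop :=
  (u.val = 0 ∧ 1 ≤ v.val ∧ ¬(4*m+4 ≤ v.val ∧ v.val ≤ 10*m+6 ∧ v.val % 2 = 0)) ∨
  (v.val = 0 ∧ (4*m+4 ≤ u.val ∧ u.val ≤ 10*m+6 ∧ u.val % 2 = 0)) ∨
  (1 ≤ u.val ∧ v.val = u.val + 1)

lemma fanF_val (m : ℕ) (v : Fin (12*m+10)) :
    ((fanF m v).val : ℤ) =
      if (v.val ≤ 4*m+3 ∧ (v.val % 4 = 1 ∨ v.val % 4 = 2)) ∨ (4*m+4 ≤ v.val ∧ v.val % 2 = 0)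
      then 1 else 0 := by
  unfold fanF; split_ifs <;> simp

/-- Encoding of an arc of the fan orientation as a natural number. -/
def encArc (m : ℕ) (p : Fin (12*m+10) × Fin (12*m+10)) : ℕ :=
  if p.1.val = 0 then p.2.val else if p.2.val = 0 then p.1.val else 12*m+10 + p.1.val

lemma fanD_struct (m : ℕ) (p : Fin (12*m+10) × Fin (12*m+10)) (hD : fanD m p.1 p.2) :
    (p.1.val = 0 ∧ 1 ≤ p.2.val ∧ ¬(4*m+4 ≤ p.2.val ∧ p.2.val ≤ 10*m+6 ∧ p.2.val % 2 = 0) ∧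
      encArc m p = p.2.val) ∨
    (p.2.val = 0 ∧ (4*m+4 ≤ p.1.val ∧ p.1.val ≤ 10*m+6 ∧ p.1.val % 2 = 0) ∧
      encArc m p = p.1.val) ∨
    (1 ≤ p.1.val ∧ p.2.val = p.1.val + 1 ∧ p.2.val < 12*m+10 ∧
      encArc m p = 12*m+10 + p.1.val) := by
  rcases hD with ⟨h1, h2, h3⟩ | ⟨h1, h2⟩ | ⟨h1, h2⟩
  · exact Or.inl ⟨h1, h2, h3, by unfold encArc; rw [if_pos h1]⟩
  · refine Or.inr (Or.inl ⟨h1, h2, ?_⟩)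
    unfold encArc; rw [if_neg (by omega), if_pos h1]
  · refine Or.inr (Or.inr ⟨h1, h2, p.2.isLt, ?_⟩)
    unfold encArc; rw [if_neg (by omega), if_neg (by omega)]

set_option maxHeartbeats 1000000 in
/-- The number of arcs with label `x` equals the cardinality of an explicit set of
natural numbers. -/
lemma arc_count_eq (m : ℕ) (x : ℤ) (Q : ℕ → Prop) [DecidablePred Q]
    (hiff : ∀ j, j < 24*m+20 → (Q j ↔
      ((1 ≤ j ∧ j < 12*m+10 ∧ ¬(4*m+4 ≤ j ∧ j ≤ 10*m+6 ∧ j % 2 = 0) ∧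
          ((if (j ≤ 4*m+3 ∧ (j % 4 = 1 ∨ j % 4 = 2)) ∨ (4*m+4 ≤ j ∧ j % 2 = 0) then (1:ℤ) else 0) -
            (if ((0:ℕ) ≤ 4*m+3 ∧ ((0:ℕ) % 4 = 1 ∨ (0:ℕ) % 4 = 2)) ∨ (4*m+4 ≤ (0:ℕ) ∧ (0:ℕ) % 2 = 0) then (1:ℤ) else 0) = x)) ∨
        (1 ≤ j ∧ j < 12*m+10 ∧ (4*m+4 ≤ j ∧ j ≤ 10*m+6 ∧ j % 2 = 0) ∧
          ((if ((0:ℕ) ≤ 4*m+3 ∧ ((0:ℕ) % 4 = 1 ∨ (0:ℕ) % 4 = 2)) ∨ (4*m+4 ≤ (0:ℕ) ∧ (0:ℕ) % 2 = 0) then (1:ℤ) else 0) -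
            (if (j ≤ 4*m+3 ∧ (j % 4 = 1 ∨ j % 4 = 2)) ∨ (4*m+4 ≤ j ∧ j % 2 = 0) then (1:ℤ) else 0) = x)) ∨
        (12*m+11 ≤ j ∧ j ≤ 24*m+18 ∧
          ((if (j - (12*m+10) + 1 ≤ 4*m+3 ∧ ((j - (12*m+10) + 1) % 4 = 1 ∨ (j - (12*m+10) + 1) % 4 = 2)) ∨
              (4*m+4 ≤ j - (12*m+10) + 1 ∧ (j - (12*m+10) + 1) % 2 = 0) then (1:ℤ) else 0) -
            (if (j - (12*m+10) ≤ 4*m+3 ∧ ((j - (12*m+10)) % 4 = 1 ∨ (j - (12*m+10)) % 4 = 2)) ∨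
              (4*m+4 ≤ j - (12*m+10) ∧ (j - (12*m+10)) % 2 = 0) then (1:ℤ) else 0) = x))))) :
    arcCount (fanD m) (fanF m) x = ((Finset.range (24*m+20)).filter Q).card := by
  classical
  unfold arcCount
  rw [Nat.card_eq_fintype_card, Fintype.card_subtype]
  apply Finset.card_bij (fun p _ => encArc m p)
  · intro p hp
    rw [Finset.mem_filter] at hp
    obtain ⟨-, hD, hx⟩ := hp
    rw [fanF_val, fanF_val] at hx
    rw [Finset.mem_filter, Finset.mem_range]
    have hlt1 := p.1.isLt
    have hlt2 := p.2.isLt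
    rcases fanD_struct m p hD with ⟨h1, h2, h3, he⟩ | ⟨h1, h2, he⟩ | ⟨h1, h2, h3, he⟩ <;> rw [he]
    · rw [h1] at hx
      exact ⟨by omega, (hiff _ (by omega)).mpr (Or.inl ⟨h2, hlt2, h3, hx⟩)⟩
    · rw [h1] at hx
      exact ⟨by omega, (hiff _ (by omega)).mpr (Or.inr (Or.inl ⟨by omega, hlt1, h2, hx⟩))⟩
    · rw [h2] at hx
      refine ⟨by omega, (hiff _ (by omega)).mpr (Or.inr (Or.inr ⟨by omega, by omega, ?_⟩))⟩
      rw [Nat.add_sub_cancel_left]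
      exact hx
  · intro p hp q hq he
    have h1 := p.1.isLt; have h2 := p.2.isLt; have h3 := q.1.isLt; have h4 := q.2.isLt
    rcases fanD_struct m p (Finset.mem_filter.mp hp).2.1 with ⟨a1,a2,a3,a4⟩|⟨a1,a2,a4⟩|⟨a1,a2,a3,a4⟩ <;>
      rcases fanD_struct m q (Finset.mem_filter.mp hq).2.1 with ⟨b1,b2,b3,b4⟩|⟨b1,b2,b4⟩|⟨b1,b2,b3,b4⟩ <;>
      rw [a4, b4] at he <;>
      exact Prod.ext (Fin.ext (by omega)) (Fin.ext (by omega))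
  · intro j hj
    rw [Finset.mem_filter, Finset.mem_range] at hj
    rcases (hiff j hj.1).mp hj.2 with ⟨h1, h2, h3, h4⟩ | ⟨h1, h2, h3, h4⟩ | ⟨h1, h2, h3⟩
    · have hb0 : (0:ℕ) < 12*m+10 := by omega
      refine ⟨(⟨0, hb0⟩, ⟨j, h2⟩), Finset.mem_filter.mpr ⟨Finset.mem_univ _, ?_, ?_⟩, ?_⟩
      · exact Or.inl ⟨rfl, h1, h3⟩
      · rw [fanF_val, fanF_val]
        exact h4
      · show (if (0:ℕ) = 0 then j else if j = 0 then (0:ℕ) else 12*m+10 + 0) = j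
        rw [if_pos rfl]
    · have hb0 : (0:ℕ) < 12*m+10 := by omega
      refine ⟨(⟨j, h2⟩, ⟨0, hb0⟩), Finset.mem_filter.mpr ⟨Finset.mem_univ _, ?_, ?_⟩, ?_⟩
      · exact Or.inr (Or.inl ⟨rfl, h3⟩)
      · rw [fanF_val, fanF_val]
        exact h4
      · show (if j = 0 then (0:ℕ) else if (0:ℕ) = 0 then j else 12*m+10 + j) = j
        rw [if_neg (by omega : ¬(j = 0)), if_pos rfl]
    · have hb1 : j - (12*m+10) < 12*m+10 := by omega
      have hb2 : j - (12*m+10) + 1 < 12*m+10 := by omega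
      refine ⟨(⟨j - (12*m+10), hb1⟩, ⟨j - (12*m+10) + 1, hb2⟩),
        Finset.mem_filter.mpr ⟨Finset.mem_univ _, ?_, ?_⟩, ?_⟩
      · exact Or.inr (Or.inr ⟨(by omega : 1 ≤ j - (12*m+10)), rfl⟩)
      · rw [fanF_val, fanF_val]
        exact h3
      · show (if j - (12*m+10) = 0 then j - (12*m+10) + 1 else
            if j - (12*m+10) + 1 = 0 then j - (12*m+10) else 12*m+10 + (j - (12*m+10))) = j
        rw [if_neg (by omega : ¬(j - (12*m+10) = 0)), if_neg (by omega : ¬(j - (12*m+10) + 1 = 0))]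
        omega

/-- The number of vertices with label `y` equals the cardinality of an explicit set
of natural numbers. -/
lemma vertex_count_eq (m : ℕ) (y : Fin 2) (Q : ℕ → Prop) [DecidablePred Q]
    (hiff : ∀ j, j < 12*m+10 → (Q j ↔
      (if (j ≤ 4*m+3 ∧ (j % 4 = 1 ∨ j % 4 = 2)) ∨ (4*m+4 ≤ j ∧ j % 2 = 0) then (1:Fin 2) else 0) = y)) :
    Nat.card {v : Fin (12*m+10) // fanF m v = y} = ((Finset.range (12*m+10)).filter Q).card := by
  classical
  rw [Nat.card_eq_fintype_card, Fintype.card_subtype]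
  apply Finset.card_bij (fun v _ => v.val)
  · intro v hv
    rw [Finset.mem_filter] at hv ⊢
    rw [Finset.mem_range]
    exact ⟨v.isLt, (hiff _ v.isLt).mpr hv.2⟩
  · intro p hp q hq he
    exact Fin.ext he
  · intro j hj
    rw [Finset.mem_filter, Finset.mem_range] at hj
    exact ⟨⟨j, hj.1⟩, Finset.mem_filter.mpr ⟨Finset.mem_univ _, (hiff j hj.1).mp hj.2⟩, rfl⟩

lemma fanQz_card (m : ℕ) :
    ((Finset.range (12*m+10)).filter (fun i =>
      (0 ≤ i ∧ i < 1) ∨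
      (i % 4 = 3 % 4 ∧ 3 ≤ i ∧ i < 4*m+7) ∨
      (i % 4 = 4 % 4 ∧ 4 ≤ i ∧ i < 4*m+4) ∨
      (i % 2 = (4*m+5) % 2 ∧ 4*m+5 ≤ i ∧ i < 12*m+11))).card = 6*m+5 := by
  rw [card_filter_or (by intro i _; omega),
      card_filter_or (by intro i _; omega),
      card_filter_or (by intro i _; omega),
      count_ival 0 1 (by omega),
      count_prog4 3 (4*m+7) (by omega) (by omega),
      count_prog4 4 (4*m+4) (by omega) (by omega),
      count_prog2 (4*m+5) (12*m+11) (by omega) (by omega)]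
  omega

lemma fanQo_card (m : ℕ) :
    ((Finset.range (12*m+10)).filter (fun i =>
      (i % 4 = 1 % 4 ∧ 1 ≤ i ∧ i < 4*m+5) ∨
      (i % 4 = 2 % 4 ∧ 2 ≤ i ∧ i < 4*m+6) ∨
      (i % 2 = (4*m+4) % 2 ∧ 4*m+4 ≤ i ∧ i < 12*m+10))).card = 6*m+5 := by
  rw [card_filter_or (by intro i _; omega),
      card_filter_or (by intro i _; omega),
      count_prog4 1 (4*m+5) (by omega) (by omega),
      count_prog4 2 (4*m+6) (by omega) (by omega),
      count_prog2 (4*m+4) (12*m+10) (by omega) (by omega)]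
  omega

lemma fanQ1_card (m : ℕ) :
    ((Finset.range (24*m+20)).filter (fun i =>
      (i % 4 = 1 % 4 ∧ 1 ≤ i ∧ i < 4*m+5) ∨
      (i % 4 = 2 % 4 ∧ 2 ≤ i ∧ i < 4*m+6) ∨
      (i % 2 = (10*m+8) % 2 ∧ 10*m+8 ≤ i ∧ i < 12*m+10) ∨
      (i % 4 = (12*m+14) % 4 ∧ 12*m+14 ≤ i ∧ i < 16*m+14) ∨
      (16*m+13 ≤ i ∧ i < 16*m+14) ∨
      (i % 2 = (16*m+15) % 2 ∧ 16*m+15 ≤ i ∧ i < 24*m+19))).card = 8*m+6 := by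
  rw [card_filter_or (by intro i _; omega),
      card_filter_or (by intro i _; omega),
      card_filter_or (by intro i _; omega),
      card_filter_or (by intro i _; omega),
      card_filter_or (by intro i _; omega),
      count_prog4 1 (4*m+5) (by omega) (by omega),
      count_prog4 2 (4*m+6) (by omega) (by omega),
      count_prog2 (10*m+8) (12*m+10) (by omega) (by omega),
      count_prog4 (12*m+14) (16*m+14) (by omega) (by omega),
      count_ival (16*m+13) (16*m+14) (by omega),
      count_prog2 (16*m+15) (24*m+19) (by omega) (by omega)]
  omega

lemma fanQm1_card (m : ℕ) :
    ((Finset.range (24*m+20)).filter (fun i =>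
      (i % 2 = (4*m+4) % 2 ∧ 4*m+4 ≤ i ∧ i < 10*m+8) ∨
      (i % 4 = (12*m+12) % 4 ∧ 12*m+12 ≤ i ∧ i < 16*m+16) ∨
      (i % 2 = (16*m+14) % 2 ∧ 16*m+14 ≤ i ∧ i < 24*m+20))).card = 8*m+6 := by
  rw [card_filter_or (by intro i _; omega),
      card_filter_or (by intro i _; omega),
      count_prog2 (4*m+4) (10*m+8) (by omega) (by omega),
      count_prog4 (12*m+12) (16*m+16) (by omega) (by omega),
      count_prog2 (16*m+14) (24*m+20) (by omega) (by omega)]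
  omega

lemma fanQ0_card (m : ℕ) :
    ((Finset.range (24*m+20)).filter (fun i =>
      (i % 4 = 3 % 4 ∧ 3 ≤ i ∧ i < 4*m+7) ∨
      (i % 4 = 4 % 4 ∧ 4 ≤ i ∧ i < 4*m+4) ∨
      (i % 2 = (4*m+5) % 2 ∧ 4*m+5 ≤ i ∧ i < 12*m+11) ∨
      (i % 4 = (12*m+11) % 4 ∧ 12*m+11 ≤ i ∧ i < 16*m+15) ∨
      (i % 4 = (12*m+13) % 4 ∧ 12*m+13 ≤ i ∧ i < 16*m+13))).card = 8*m+5 := by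
  rw [card_filter_or (by intro i _; omega),
      card_filter_or (by intro i _; omega),
      card_filter_or (by intro i _; omega),
      card_filter_or (by intro i _; omega),
      count_prog4 3 (4*m+7) (by omega) (by omega),
      count_prog4 4 (4*m+4) (by omega) (by omega),
      count_prog2 (4*m+5) (12*m+11) (by omega) (by omega),
      count_prog4 (12*m+11) (16*m+15) (by omega) (by omega),
      count_prog4 (12*m+13) (16*m+13) (by omega) (by omega)]
  omega

set_option maxHeartbeats 4000000 in
/-- If 2n - 3 = 3z + 2, n = 2k and k = 2ℓ + 1 for some z, k, ℓ, then the n-fan has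
a (2,3)-cordial orientation. -/
theorem fan_orientable_special (n : ℕ)
    (h : ∃ z k ℓ : ℕ, 2 * n - 3 = 3 * z + 2 ∧ n = 2 * k ∧ k = 2 * ℓ + 1) :
    Orientable23 (fanGraph n) := by
  classical
  obtain ⟨z, k, l, h1, h2, h3⟩ := h
  obtain ⟨m, rfl⟩ : ∃ m, n = 12*m+10 := ⟨(n-10)/12, by omega⟩
  -- the three arc counts
  have hc1 : arcCount (fanD m) (fanF m) 1 = 8*m+6 := by
    refine (arc_count_eq m 1 (fun i =>
      (i % 4 = 1 % 4 ∧ 1 ≤ i ∧ i < 4*m+5) ∨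
      (i % 4 = 2 % 4 ∧ 2 ≤ i ∧ i < 4*m+6) ∨
      (i % 2 = (10*m+8) % 2 ∧ 10*m+8 ≤ i ∧ i < 12*m+10) ∨
      (i % 4 = (12*m+14) % 4 ∧ 12*m+14 ≤ i ∧ i < 16*m+14) ∨
      (16*m+13 ≤ i ∧ i < 16*m+14) ∨
      (i % 2 = (16*m+15) % 2 ∧ 16*m+15 ≤ i ∧ i < 24*m+19)) ?_).trans (fanQ1_card m)
    intro j hj
    beta_reduce
    simp only [ite_sub_eq_one]
    omega
  have hcm1 : arcCount (fanD m) (fanF m) (-1) = 8*m+6 := by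
    refine (arc_count_eq m (-1) (fun i =>
      (i % 2 = (4*m+4) % 2 ∧ 4*m+4 ≤ i ∧ i < 10*m+8) ∨
      (i % 4 = (12*m+12) % 4 ∧ 12*m+12 ≤ i ∧ i < 16*m+16) ∨
      (i % 2 = (16*m+14) % 2 ∧ 16*m+14 ≤ i ∧ i < 24*m+20)) ?_).trans (fanQm1_card m)
    intro j hj
    beta_reduce
    simp only [ite_sub_eq_negone]
    omega
  have hc0 : arcCount (fanD m) (fanF m) 0 = 8*m+5 := by
    refine (arc_count_eq m 0 (fun i =>
      (i % 4 = 3 % 4 ∧ 3 ≤ i ∧ i < 4*m+7) ∨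
      (i % 4 = 4 % 4 ∧ 4 ≤ i ∧ i < 4*m+4) ∨
      (i % 2 = (4*m+5) % 2 ∧ 4*m+5 ≤ i ∧ i < 12*m+11) ∨
      (i % 4 = (12*m+11) % 4 ∧ 12*m+11 ≤ i ∧ i < 16*m+15) ∨
      (i % 4 = (12*m+13) % 4 ∧ 12*m+13 ≤ i ∧ i < 16*m+13)) ?_).trans (fanQ0_card m)
    intro j hj
    beta_reduce
    simp only [ite_sub_eq_zero]
    omega
  -- the two vertex counts
  have hvz : Nat.card {v : Fin (12*m+10) // fanF m v = 0} = 6*m+5 := by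
    refine (vertex_count_eq m 0 (fun i =>
      (0 ≤ i ∧ i < 1) ∨
      (i % 4 = 3 % 4 ∧ 3 ≤ i ∧ i < 4*m+7) ∨
      (i % 4 = 4 % 4 ∧ 4 ≤ i ∧ i < 4*m+4) ∨
      (i % 2 = (4*m+5) % 2 ∧ 4*m+5 ≤ i ∧ i < 12*m+11)) ?_).trans (fanQz_card m)
    intro j hj
    beta_reduce
    split_ifs with hP
    · exact iff_of_false (by omega) (by decide)
    · exact iff_of_true (by omega) rfl
  have hvo : Nat.card {v : Fin (12*m+10) // fanF m v = 1} = 6*m+5 := by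
    refine (vertex_count_eq m 1 (fun i =>
      (i % 4 = 1 % 4 ∧ 1 ≤ i ∧ i < 4*m+5) ∨
      (i % 4 = 2 % 4 ∧ 2 ≤ i ∧ i < 4*m+6) ∨
      (i % 2 = (4*m+4) % 2 ∧ 4*m+4 ≤ i ∧ i < 12*m+10)) ?_).trans (fanQo_card m)
    intro j hj
    beta_reduce
    split_ifs with hP
    · exact iff_of_true (by omega) rfl
    · exact iff_of_false (by omega) (by decide)
  have hfr : Friendly (fanF m) := by
    unfold Friendly
    rw [hvz, hvo, sub_self, abs_zero]
    exact zero_le_one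
  unfold Orientable23 Cordial23
  refine ⟨fanD m, ?_, ?_, fanF m, hfr, ?_, ?_, ?_⟩
  · intro u v hD
    have h1 := u.isLt; have h2 := v.isLt
    simp only [fanGraph, SimpleGraph.fromRel_adj]
    rcases hD with ⟨a1,a2,a3⟩|⟨a1,a2⟩|⟨a1,a2⟩ <;>
      exact ⟨fun hEq => by have := congrArg Fin.val hEq; omega, by omega⟩
  · intro u v hA
    simp only [fanGraph, SimpleGraph.fromRel_adj] at hA
    obtain ⟨hne, hr⟩ := hA
    have hne' : u.val ≠ v.val := fun hh => hne (Fin.ext hh)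
    have h1 := u.isLt; have h2 := v.isLt
    unfold fanD
    omega
  · rw [hc1, hcm1, sub_self, abs_zero]
    exact zero_le_one
  · rw [hc1, hc0]
    rw [show ((8*m+6 : ℕ) : ℤ) - ((8*m+5 : ℕ) : ℤ) = 1 by push_cast; ring]
    norm_num
  · rw [hcm1, hc0]
    rw [show ((8*m+6 : ℕ) : ℤ) - ((8*m+5 : ℕ) : ℤ) = 1 by push_cast; ring]
    norm_num
end

section
/- For every n ≥ 4, the n-fan F_n is (2,3)-orientable; that is, some orientation of F_n is (2,3)-cordial. -/
open Finset

namespace Fan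

def lb (L : ℕ → Bool) (i : ℕ) : Fin 2 := if i = 0 then 0 else if L (i-1) then 1 else 0

lemma lbVal (L : ℕ → Bool) (i : ℕ) :
    ((lb L i).val : ℤ) = if i = 0 then 0 else if L (i-1) then 1 else 0 := by
  unfold lb; split_ifs <;> rfl

def sLab (L S : ℕ → Bool) (j : ℕ) : ℤ := if L j then (if S j then 1 else -1) else 0

def pLab (L P : ℕ → Bool) (j : ℕ) : ℤ :=
  (if P j then 1 else -1) * ((if L (j+1) then (1:ℤ) else 0) - (if L j then 1 else 0))

def Rrel (S P : ℕ → Bool) (a b : ℕ) : Prop :=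
  (a = 0 ∧ 1 ≤ b ∧ S (b-1) = true) ∨ (b = 0 ∧ 1 ≤ a ∧ S (a-1) = false) ∨
  (1 ≤ a ∧ b = a + 1 ∧ P (a-1) = true) ∨ (1 ≤ b ∧ a = b + 1 ∧ P (b-1) = false)

instance (S P : ℕ → Bool) (a b : ℕ) : Decidable (Rrel S P a b) := by
  unfold Rrel; infer_instance

lemma or1 (S P : ℕ → Bool) (n : ℕ) (u v : Fin n) (h : Rrel S P u.val v.val) :
    (fanGraph n).Adj u v := by
  simp only [fanGraph, SimpleGraph.fromRel_adj, ne_eq, Fin.ext_iff]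
  rcases h with ⟨h1, h2, _⟩ | ⟨h1, h2, _⟩ | ⟨h1, h2, _⟩ | ⟨h1, h2, _⟩ <;>
    constructor <;> omega

lemma or2 (S P : ℕ → Bool) (n : ℕ) (u v : Fin n) (h : (fanGraph n).Adj u v) :
    (Rrel S P u.val v.val ↔ ¬ Rrel S P v.val u.val) := by
  simp only [fanGraph, SimpleGraph.fromRel_adj, ne_eq, Fin.ext_iff] at h
  obtain ⟨hne, hrel⟩ := h
  unfold Rrel
  cases hS1 : S (u.val - 1) <;> cases hS2 : S (v.val - 1) <;>
    cases hP1 : P (u.val - 1) <;> cases hP2 : P (v.val - 1) <;>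
    simp only [hS1, hS2, hP1, hP2] <;> simp <;> omega


lemma spoke_card (L S P : ℕ → Bool) (n : ℕ) (x : ℤ) :
    ((univ : Finset (Fin n × Fin n)).filter
        (fun p => (Rrel S P p.1.val p.2.val ∧ ((lb L p.2.val).val : ℤ) - ((lb L p.1.val).val : ℤ) = x)
          ∧ (p.1.val = 0 ∨ p.2.val = 0))).card
      = ((range (n-1)).filter (fun j => sLab L S j = x)).card := by
  apply Finset.card_bij (i := fun p _ => p.1.val + p.2.val - 1)
  · -- hi : maps into target
    rintro ⟨u, v⟩ hp
    simp only [mem_filter, mem_univ, true_and] at hp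
    obtain ⟨⟨hR, hx⟩, hsp⟩ := hp
    rcases hR with ⟨h1, h2, h3⟩ | ⟨h1, h2, h3⟩ | ⟨h1, h2, h3⟩ | ⟨h1, h2, h3⟩
    · obtain ⟨j, hj⟩ : ∃ j, v.val = j + 1 := ⟨v.val - 1, by omega⟩
      have hv := v.isLt
      simp only [mem_filter, mem_range]
      refine ⟨by omega, ?_⟩
      have he : u.val + v.val - 1 = j := by omega
      rw [he]
      have hS : S j = true := by rw [← h3]; congr 1; omega
      rw [lbVal, lbVal, h1, hj] at hx
      simp only [Nat.add_sub_cancel, if_neg (Nat.succ_ne_zero j), if_pos rfl] at hx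
      simp only [sLab, hS]
      cases hL : L j <;> simp only [hL] at hx ⊢ <;> simp at hx ⊢ <;> omega
    · obtain ⟨j, hj⟩ : ∃ j, u.val = j + 1 := ⟨u.val - 1, by omega⟩
      have hv := u.isLt
      simp only [mem_filter, mem_range]
      refine ⟨by omega, ?_⟩
      have he : u.val + v.val - 1 = j := by omega
      rw [he]
      have hS : S j = false := by rw [← h3]; congr 1; omega
      rw [lbVal, lbVal, h1, hj] at hx
      simp only [Nat.add_sub_cancel, if_neg (Nat.succ_ne_zero j), if_pos rfl] at hx
      simp only [sLab, hS]
      cases hL : L j <;> simp only [hL] at hx ⊢ <;> simp at hx ⊢ <;> omega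
    · omega
    · omega
  · -- injective
    rintro ⟨u, v⟩ hp ⟨u', v'⟩ hq hij
    simp only [mem_filter, mem_univ, true_and] at hp hq
    obtain ⟨⟨hR, _⟩, hsp⟩ := hp
    obtain ⟨⟨hR', _⟩, hsp'⟩ := hq
    dsimp only at hij
    rcases hR with ⟨h1, h2, h3⟩ | ⟨h1, h2, h3⟩ | ⟨h1, h2, h3⟩ | ⟨h1, h2, h3⟩
    · rcases hR' with ⟨k1, k2, k3⟩ | ⟨k1, k2, k3⟩ | ⟨k1, k2, k3⟩ | ⟨k1, k2, k3⟩
      · simp only [Prod.mk.injEq, Fin.ext_iff]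
        omega
      · exfalso
        have he : (v:ℕ) - 1 = (u':ℕ) - 1 := by omega
        rw [he, k3] at h3
        simp at h3
      · omega
      · omega
    · rcases hR' with ⟨k1, k2, k3⟩ | ⟨k1, k2, k3⟩ | ⟨k1, k2, k3⟩ | ⟨k1, k2, k3⟩
      · exfalso
        have he : (u:ℕ) - 1 = (v':ℕ) - 1 := by omega
        rw [he, k3] at h3
        simp at h3
      · simp only [Prod.mk.injEq, Fin.ext_iff]
        omega
      · omega
      · omega
    · omega
    · omega
  · -- surjective
    intro jv hj
    simp only [mem_filter, mem_range] at hj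
    obtain ⟨hlt, hlab⟩ := hj
    by_cases hS : S jv
    · refine ⟨(⟨0, by omega⟩, ⟨jv+1, by omega⟩), ?_, by simp⟩
      simp only [mem_filter, mem_univ, true_and]
      refine ⟨⟨Or.inl ⟨rfl, by omega, by simpa using hS⟩, ?_⟩, by simp⟩
      rw [lbVal, lbVal]
      simp only [Nat.add_sub_cancel, if_neg (Nat.succ_ne_zero jv), if_pos rfl]
      simp only [sLab, hS] at hlab
      cases hL : L jv <;> simp only [hL] at hlab ⊢ <;> simp at hlab ⊢ <;> omega
    · refine ⟨(⟨jv+1, by omega⟩, ⟨0, by omega⟩), ?_, by simp⟩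
      simp only [mem_filter, mem_univ, true_and]
      refine ⟨⟨Or.inr (Or.inl ⟨rfl, by omega, by simpa using hS⟩), ?_⟩, by simp⟩
      rw [lbVal, lbVal]
      simp only [Nat.add_sub_cancel, if_neg (Nat.succ_ne_zero jv), if_pos rfl]
      simp only [sLab, hS] at hlab
      cases hL : L jv <;> simp only [hL] at hlab ⊢ <;> simp at hlab ⊢ <;> omega

lemma path_card (L S P : ℕ → Bool) (n : ℕ) (x : ℤ) :
    ((univ : Finset (Fin n × Fin n)).filter
        (fun p => (Rrel S P p.1.val p.2.val ∧ ((lb L p.2.val).val : ℤ) - ((lb L p.1.val).val : ℤ) = x)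
          ∧ ¬(p.1.val = 0 ∨ p.2.val = 0))).card
      = ((range (n-2)).filter (fun j => pLab L P j = x)).card := by
  apply Finset.card_bij (i := fun p _ => min p.1.val p.2.val - 1)
  · -- maps into target
    rintro ⟨u, v⟩ hp
    simp only [mem_filter, mem_univ, true_and] at hp
    obtain ⟨⟨hR, hx⟩, hsp⟩ := hp
    rcases hR with ⟨h1, h2, h3⟩ | ⟨h1, h2, h3⟩ | ⟨h1, h2, h3⟩ | ⟨h1, h2, h3⟩
    · omega
    · omega
    · obtain ⟨j, hu⟩ : ∃ j, u.val = j + 1 := ⟨u.val - 1, by omega⟩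
      have hv : v.val = j + 2 := by omega
      have hlt := v.isLt
      simp only [mem_filter, mem_range]
      refine ⟨by omega, ?_⟩
      have he : min (u.val) (v.val) - 1 = j := by omega
      rw [he]
      have hP : P j = true := by rw [← h3]; congr 1; omega
      rw [lbVal, lbVal, hu, hv] at hx
      rw [if_neg (by omega : ¬(j+2 = 0)), if_neg (by omega : ¬(j+1 = 0))] at hx
      rw [(by omega : j + 2 - 1 = j + 1), (by omega : j + 1 - 1 = j)] at hx
      simp only [pLab, hP]
      cases hL1 : L j <;> cases hL2 : L (j+1) <;>
        simp only [hL1, hL2] at hx ⊢ <;> simp at hx ⊢ <;> omega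
    · obtain ⟨j, hv⟩ : ∃ j, v.val = j + 1 := ⟨v.val - 1, by omega⟩
      have hu : u.val = j + 2 := by omega
      have hlt := u.isLt
      simp only [mem_filter, mem_range]
      refine ⟨by omega, ?_⟩
      have he : min (u.val) (v.val) - 1 = j := by omega
      rw [he]
      have hP : P j = false := by rw [← h3]; congr 1; omega
      rw [lbVal, lbVal, hu, hv] at hx
      rw [if_neg (by omega : ¬(j+2 = 0)), if_neg (by omega : ¬(j+1 = 0))] at hx
      rw [(by omega : j + 2 - 1 = j + 1), (by omega : j + 1 - 1 = j)] at hx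
      simp only [pLab, hP]
      cases hL1 : L j <;> cases hL2 : L (j+1) <;>
        simp only [hL1, hL2] at hx ⊢ <;> simp at hx ⊢ <;> omega
  · -- injective
    rintro ⟨u, v⟩ hp ⟨u', v'⟩ hq hij
    simp only [mem_filter, mem_univ, true_and] at hp hq
    obtain ⟨⟨hR, _⟩, hsp⟩ := hp
    obtain ⟨⟨hR', _⟩, hsp'⟩ := hq
    dsimp only at hij
    rcases hR with ⟨h1, h2, h3⟩ | ⟨h1, h2, h3⟩ | ⟨h1, h2, h3⟩ | ⟨h1, h2, h3⟩
    · omega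
    · omega
    · rcases hR' with ⟨k1, k2, k3⟩ | ⟨k1, k2, k3⟩ | ⟨k1, k2, k3⟩ | ⟨k1, k2, k3⟩
      · omega
      · omega
      · simp only [Prod.mk.injEq, Fin.ext_iff]
        omega
      · exfalso
        have he : (u:ℕ) - 1 = (v':ℕ) - 1 := by omega
        rw [he, k3] at h3
        simp at h3
    · rcases hR' with ⟨k1, k2, k3⟩ | ⟨k1, k2, k3⟩ | ⟨k1, k2, k3⟩ | ⟨k1, k2, k3⟩
      · omega
      · omega
      · exfalso
        have he : (v:ℕ) - 1 = (u':ℕ) - 1 := by omega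
        rw [he, k3] at h3
        simp at h3
      · simp only [Prod.mk.injEq, Fin.ext_iff]
        omega
  · -- surjective
    intro jv hj
    simp only [mem_filter, mem_range] at hj
    obtain ⟨hlt, hlab⟩ := hj
    by_cases hP : P jv
    · refine ⟨(⟨jv+1, by omega⟩, ⟨jv+2, by omega⟩), ?_, by dsimp only; omega⟩
      simp only [mem_filter, mem_univ, true_and]
      refine ⟨⟨Or.inr (Or.inr (Or.inl ⟨by omega, rfl, by simpa using hP⟩)), ?_⟩, by omega⟩
      rw [lbVal, lbVal]
      rw [if_neg (by omega : ¬(jv+2 = 0)), if_neg (by omega : ¬(jv+1 = 0))]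
      rw [(by omega : jv + 2 - 1 = jv + 1), (by omega : jv + 1 - 1 = jv)]
      simp only [pLab, hP] at hlab
      cases hL1 : L jv <;> cases hL2 : L (jv+1) <;>
        simp only [hL1, hL2] at hlab ⊢ <;> simp at hlab ⊢ <;> omega
    · refine ⟨(⟨jv+2, by omega⟩, ⟨jv+1, by omega⟩), ?_, by dsimp only; omega⟩
      simp only [mem_filter, mem_univ, true_and]
      have hP' : P jv = false := by simpa using hP
      refine ⟨⟨Or.inr (Or.inr (Or.inr ⟨by omega, rfl, by simpa using hP'⟩)), ?_⟩, by omega⟩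
      rw [lbVal, lbVal]
      rw [if_neg (by omega : ¬(jv+2 = 0)), if_neg (by omega : ¬(jv+1 = 0))]
      rw [(by omega : jv + 2 - 1 = jv + 1), (by omega : jv + 1 - 1 = jv)]
      simp only [pLab, hP'] at hlab
      cases hL1 : L jv <;> cases hL2 : L (jv+1) <;>
        simp only [hL1, hL2] at hlab ⊢ <;> simp at hlab ⊢ <;> omega

lemma count_formula (L S P : ℕ → Bool) (n : ℕ) (x : ℤ) :
    arcCount (fun u v : Fin n => Rrel S P u.val v.val) (fun v : Fin n => lb L v.val) x
      = ((range (n-1)).filter (fun j => sLab L S j = x)).card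
        + ((range (n-2)).filter (fun j => pLab L P j = x)).card := by
  rw [arcCount, Nat.card_eq_fintype_card, Fintype.card_subtype]
  rw [← spoke_card L S P n x, ← path_card L S P n x]
  have h := card_filter_add_card_filter_not
    (s := (univ : Finset (Fin n × Fin n)).filter
      (fun p => Rrel S P p.1.val p.2.val ∧ ((lb L p.2.val).val : ℤ) - ((lb L p.1.val).val : ℤ) = x))
    (p := fun p => p.1.val = 0 ∨ p.2.val = 0)
  rw [filter_filter, filter_filter] at h
  omega

lemma lb_eq_one_iff (L : ℕ → Bool) (i : ℕ) : lb L i = 1 ↔ (¬ i = 0 ∧ L (i-1) = true) := by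
  unfold lb
  split_ifs with h1 h2 <;> simp_all <;> decide

lemma ones_card (L : ℕ → Bool) (n : ℕ) :
    Nat.card {v : Fin n // lb L v.val = 1} = ((range (n-1)).filter (fun j => L j = true)).card := by
  rw [Nat.card_eq_fintype_card, Fintype.card_subtype]
  apply Finset.card_bij (i := fun v _ => v.val - 1)
  · intro v hv
    simp only [mem_filter, mem_univ, true_and, lb_eq_one_iff] at hv
    have := v.isLt
    simp only [mem_filter, mem_range]
    exact ⟨by omega, hv.2⟩
  · intro v hv v' hv' hij
    simp only [mem_filter, mem_univ, true_and, lb_eq_one_iff] at hv hv'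
    apply Fin.ext
    omega
  · intro jv hj
    simp only [mem_filter, mem_range] at hj
    refine ⟨⟨jv + 1, by omega⟩, ?_, by dsimp only; omega⟩
    simp only [mem_filter, mem_univ, true_and, lb_eq_one_iff]
    exact ⟨by omega, by simpa using hj.2⟩

lemma zeros_ones (L : ℕ → Bool) (n : ℕ) :
    Nat.card {v : Fin n // lb L v.val = 0} + Nat.card {v : Fin n // lb L v.val = 1} = n := by
  classical
  rw [Nat.card_eq_fintype_card, Nat.card_eq_fintype_card, Fintype.card_subtype, Fintype.card_subtype]
  have h : ∀ v : Fin n, (lb L v.val = 1) ↔ ¬ (lb L v.val = 0) := by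
    intro v
    generalize lb L v.val = y
    revert y; decide
  rw [filter_congr (fun v _ => h v)]
  rw [card_filter_add_card_filter_not]
  exact Finset.card_fin n

lemma periodic_block (q : ℕ → Prop) [DecidablePred q] (hq : ∀ j, q (j + 12) ↔ q j) (m : ℕ) :
    ((range (12 + m)).filter q).card = ((range 12).filter q).card + ((range m).filter q).card := by
  rw [Finset.range_add, filter_union, card_union_of_disjoint]
  · congr 1
    rw [Finset.filter_map, card_map]
    congr 1
    apply filter_congr
    intro j _
    simp only [Function.comp_apply, addLeftEmbedding_apply]
    rw [show 12 + j = j + 12 by ring, hq j]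
  · apply Finset.disjoint_filter_filter
    rw [Finset.disjoint_left]
    intro a ha hb
    simp only [mem_range] at ha
    simp only [mem_map, mem_range, addLeftEmbedding_apply] at hb
    omega

lemma periodic_count (q : ℕ → Prop) [DecidablePred q] (hq : ∀ j, q (j + 12) ↔ q j) :
    ∀ k t : ℕ, ((range (12 * k + t)).filter q).card
      = k * ((range 12).filter q).card + ((range t).filter q).card := by
  intro k
  induction k with
  | zero => intro t; simp
  | succ k ih =>
    intro t
    rw [show 12 * (k + 1) + t = 12 + (12 * k + t) by ring, periodic_block q hq, ih t]
    ring


lemma arc_eval (L S P : ℕ → Bool) (hL : ∀ j, L (j+12) = L j) (hS : ∀ j, S (j+12) = S j)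
    (hP : ∀ j, P (j+12) = P j) (k t : ℕ) (ht : 2 ≤ t) (x : ℤ) :
    arcCount (fun u v : Fin (12*k+t) => Rrel S P u.val v.val) (fun v : Fin (12*k+t) => lb L v.val) x
      = k * (((range 12).filter (fun j => sLab L S j = x)).card
              + ((range 12).filter (fun j => pLab L P j = x)).card)
        + (((range (t-1)).filter (fun j => sLab L S j = x)).card
            + ((range (t-2)).filter (fun j => pLab L P j = x)).card) := by
  have hqs : ∀ j, (sLab L S (j+12) = x) ↔ (sLab L S j = x) := by
    intro j; rw [sLab, sLab, hL, hS]
  have hqp : ∀ j, (pLab L P (j+12) = x) ↔ (pLab L P j = x) := by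
    intro j
    unfold pLab
    rw [show j+12+1 = (j+1)+12 by ring, hL, hL, hP]
  rw [count_formula]
  rw [show 12*k + t - 1 = 12*k + (t-1) by omega, show 12*k + t - 2 = 12*k + (t-2) by omega]
  rw [periodic_count _ hqs, periodic_count _ hqp]
  ring

lemma ones_eval (L : ℕ → Bool) (hL : ∀ j, L (j+12) = L j) (k t : ℕ) (ht : 1 ≤ t) :
    Nat.card {v : Fin (12*k+t) // lb L v.val = 1}
      = k * ((range 12).filter (fun j => L j = true)).card
        + ((range (t-1)).filter (fun j => L j = true)).card := by
  rw [ones_card, show 12*k + t - 1 = 12*k + (t-1) by omega,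
    periodic_count _ (fun j => by rw [hL j])]

lemma main_case (L S P : ℕ → Bool)
    (hL : ∀ j, L (j+12) = L j) (hS : ∀ j, S (j+12) = S j) (hP : ∀ j, P (j+12) = P j)
    (k t a1 b1 c1 o1 : ℕ) (ht : 2 ≤ t)
    (hpa : ((range 12).filter (fun j => sLab L S j = 1)).card
        + ((range 12).filter (fun j => pLab L P j = 1)).card = 8)
    (hpb : ((range 12).filter (fun j => sLab L S j = -1)).card
        + ((range 12).filter (fun j => pLab L P j = -1)).card = 8)
    (hpc : ((range 12).filter (fun j => sLab L S j = 0)).card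
        + ((range 12).filter (fun j => pLab L P j = 0)).card = 8)
    (hpo : ((range 12).filter (fun j => L j = true)).card = 6)
    (ga : ((range (t-1)).filter (fun j => sLab L S j = 1)).card
        + ((range (t-2)).filter (fun j => pLab L P j = 1)).card = a1)
    (gb : ((range (t-1)).filter (fun j => sLab L S j = -1)).card
        + ((range (t-2)).filter (fun j => pLab L P j = -1)).card = b1)
    (gc : ((range (t-1)).filter (fun j => sLab L S j = 0)).card
        + ((range (t-2)).filter (fun j => pLab L P j = 0)).card = c1)
    (go : ((range (t-1)).filter (fun j => L j = true)).card = o1)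
    (iab : a1 ≤ b1 + 1) (iba : b1 ≤ a1 + 1) (iac : a1 ≤ c1 + 1) (ica : c1 ≤ a1 + 1)
    (ibc : b1 ≤ c1 + 1) (icb : c1 ≤ b1 + 1) (io1 : t ≤ 2*o1 + 1) (io2 : 2*o1 ≤ t + 1) :
    Orientable23 (fanGraph (12*k + t)) := by
  have e1 := arc_eval L S P hL hS hP k t ht 1
  have e2 := arc_eval L S P hL hS hP k t ht (-1)
  have e3 := arc_eval L S P hL hS hP k t ht 0
  rw [hpa, ga] at e1
  rw [hpb, gb] at e2
  rw [hpc, gc] at e3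
  refine ⟨fun u v => Rrel S P u.val v.val, fun u v h => or1 S P _ u v h,
    fun u v h => or2 S P _ u v h, fun v => lb L v.val, ?_, ?_, ?_, ?_⟩
  · show |((Nat.card {v : Fin (12*k+t) // lb L v.val = 0} : ℤ))
        - ((Nat.card {v : Fin (12*k+t) // lb L v.val = 1} : ℤ))| ≤ 1
    have h1 := zeros_ones L (12*k+t)
    have h2 := ones_eval L hL k t (by omega)
    rw [hpo, go] at h2
    rw [abs_le]
    omega
  · show |((arcCount (fun u v : Fin (12*k+t) => Rrel S P u.val v.val)
        (fun v : Fin (12*k+t) => lb L v.val) 1 : ℤ))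
      - ((arcCount (fun u v : Fin (12*k+t) => Rrel S P u.val v.val)
        (fun v : Fin (12*k+t) => lb L v.val) (-1) : ℤ))| ≤ 1
    rw [e1, e2, abs_le]
    omega
  · show |((arcCount (fun u v : Fin (12*k+t) => Rrel S P u.val v.val)
        (fun v : Fin (12*k+t) => lb L v.val) 1 : ℤ))
      - ((arcCount (fun u v : Fin (12*k+t) => Rrel S P u.val v.val)
        (fun v : Fin (12*k+t) => lb L v.val) 0 : ℤ))| ≤ 1
    rw [e1, e3, abs_le]
    omega
  · show |((arcCount (fun u v : Fin (12*k+t) => Rrel S P u.val v.val)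
        (fun v : Fin (12*k+t) => lb L v.val) (-1) : ℤ))
      - ((arcCount (fun u v : Fin (12*k+t) => Rrel S P u.val v.val)
        (fun v : Fin (12*k+t) => lb L v.val) 0 : ℤ))| ≤ 1
    rw [e2, e3, abs_le]
    omega

def LA : ℕ → Bool := fun j =>
  [true,false,true,true,false,true,false,false,true,false,true,false].getD (j % 12) false
def SA : ℕ → Bool := fun _ => false
def PA : ℕ → Bool := fun j =>
  [false,true,false,false,true,false,false,false,false,true,false,false].getD (j % 12) false
def LB : ℕ → Bool := fun j =>
  [true,false,true,false,true,false,false,true,true,false,true,false].getD (j % 12) false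
def PB : ℕ → Bool := fun j =>
  [false,false,false,true,false,false,true,false,false,false,false,true].getD (j % 12) false

lemma hLA : ∀ j, LA (j+12) = LA j := fun j => by simp [LA, Nat.add_mod_right]
lemma hSA : ∀ j, SA (j+12) = SA j := fun _ => rfl
lemma hPA : ∀ j, PA (j+12) = PA j := fun j => by simp [PA, Nat.add_mod_right]
lemma hLB : ∀ j, LB (j+12) = LB j := fun j => by simp [LB, Nat.add_mod_right]
lemma hPB : ∀ j, PB (j+12) = PB j := fun j => by simp [PB, Nat.add_mod_right]

end Fan

/-- For every n ≥ 4, the n-fan is (2,3)-orientable. -/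
theorem fan_orientable (n : ℕ) (hn : 4 ≤ n) : Orientable23 (fanGraph n) := by
  obtain ⟨k, t, ht1, ht2, rfl⟩ : ∃ k t, 4 ≤ t ∧ t ≤ 15 ∧ n = 12*k + t :=
    ⟨(n-4)/12, (n-4)%12+4, by omega, by omega, by omega⟩
  interval_cases t
  · exact Fan.main_case Fan.LA Fan.SA Fan.PA Fan.hLA Fan.hSA Fan.hPA k 4 2 2 1 2 (by omega)
      (by decide) (by decide) (by decide) (by decide)
      (by decide) (by decide) (by decide) (by decide)
      (by omega) (by omega) (by omega) (by omega) (by omega) (by omega) (by omega) (by omega)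
  · exact Fan.main_case Fan.LA Fan.SA Fan.PA Fan.hLA Fan.hSA Fan.hPA k 5 2 3 2 3 (by omega)
      (by decide) (by decide) (by decide) (by decide)
      (by decide) (by decide) (by decide) (by decide)
      (by omega) (by omega) (by omega) (by omega) (by omega) (by omega) (by omega) (by omega)
  · exact Fan.main_case Fan.LA Fan.SA Fan.PA Fan.hLA Fan.hSA Fan.hPA k 6 3 3 3 3 (by omega)
      (by decide) (by decide) (by decide) (by decide)
      (by decide) (by decide) (by decide) (by decide)
      (by omega) (by omega) (by omega) (by omega) (by omega) (by omega) (by omega) (by omega)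
  · exact Fan.main_case Fan.LA Fan.SA Fan.PA Fan.hLA Fan.hSA Fan.hPA k 7 4 4 3 4 (by omega)
      (by decide) (by decide) (by decide) (by decide)
      (by decide) (by decide) (by decide) (by decide)
      (by omega) (by omega) (by omega) (by omega) (by omega) (by omega) (by omega) (by omega)
  · exact Fan.main_case Fan.LA Fan.SA Fan.PA Fan.hLA Fan.hSA Fan.hPA k 8 5 4 4 4 (by omega)
      (by decide) (by decide) (by decide) (by decide)
      (by decide) (by decide) (by decide) (by decide)
      (by omega) (by omega) (by omega) (by omega) (by omega) (by omega) (by omega) (by omega)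
  · exact Fan.main_case Fan.LB Fan.SA Fan.PB Fan.hLB Fan.hSA Fan.hPB k 9 5 5 5 4 (by omega)
      (by decide) (by decide) (by decide) (by decide)
      (by decide) (by decide) (by decide) (by decide)
      (by omega) (by omega) (by omega) (by omega) (by omega) (by omega) (by omega) (by omega)
  · exact Fan.main_case Fan.LA Fan.SA Fan.PA Fan.hLA Fan.hSA Fan.hPA k 10 5 6 6 5 (by omega)
      (by decide) (by decide) (by decide) (by decide)
      (by decide) (by decide) (by decide) (by decide)
      (by omega) (by omega) (by omega) (by omega) (by omega) (by omega) (by omega) (by omega)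
  · exact Fan.main_case Fan.LA Fan.SA Fan.PA Fan.hLA Fan.hSA Fan.hPA k 11 6 6 7 5 (by omega)
      (by decide) (by decide) (by decide) (by decide)
      (by decide) (by decide) (by decide) (by decide)
      (by omega) (by omega) (by omega) (by omega) (by omega) (by omega) (by omega) (by omega)
  · exact Fan.main_case Fan.LA Fan.SA Fan.PA Fan.hLA Fan.hSA Fan.hPA k 12 7 7 7 6 (by omega)
      (by decide) (by decide) (by decide) (by decide)
      (by decide) (by decide) (by decide) (by decide)
      (by omega) (by omega) (by omega) (by omega) (by omega) (by omega) (by omega) (by omega)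
  · exact Fan.main_case Fan.LA Fan.SA Fan.PA Fan.hLA Fan.hSA Fan.hPA k 13 8 7 8 6 (by omega)
      (by decide) (by decide) (by decide) (by decide)
      (by decide) (by decide) (by decide) (by decide)
      (by omega) (by omega) (by omega) (by omega) (by omega) (by omega) (by omega) (by omega)
  · exact Fan.main_case Fan.LA Fan.SA Fan.PA Fan.hLA Fan.hSA Fan.hPA k 14 8 9 8 7 (by omega)
      (by decide) (by decide) (by decide) (by decide)
      (by decide) (by decide) (by decide) (by decide)
      (by omega) (by omega) (by omega) (by omega) (by omega) (by omega) (by omega) (by omega)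
  · exact Fan.main_case Fan.LA Fan.SA Fan.PA Fan.hLA Fan.hSA Fan.hPA k 15 9 9 9 7 (by omega)
      (by decide) (by decide) (by decide) (by decide)
      (by decide) (by decide) (by decide) (by decide)
      (by omega) (by omega) (by omega) (by omega) (by omega) (by omega) (by omega) (by omega)
end

section
/- An undirected simple graph G with m edges is (2,3)-orientable if and only if there exists a friendly vertex labelling f : V → {0,1} such that the number γ of edges of G whose two endpoints receive the same label satisfies |3γ − m| ≤ 2. -/
/-
In every orientation the arcs labelled `0` are exactly the monochromatic edges, so `γ` does not
depend on the orientation and `α + β = m - γ`. Pairwise closeness of `α, β, γ` therefore forces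
`|3γ - m| ≤ 2`. Conversely, orient `⌊(m - γ)/2⌋` of the bichromatic edges from their `0`-end and
the rest from their `1`-end: then `|α - β| ≤ 1`, and `|3γ - m| ≤ 2` puts all three within one of
each other.
-/

theorem Set.exists_subset_ncard_eq {α : Type*} {s : Set α} {k : ℕ} (hk : k ≤ s.ncard)
    (hs : s.Finite := by toFinite_tac) : ∃ t ⊆ s, t.ncard = k := by
  obtain ⟨t, hts, ht⟩ :=
    Set.exists_subset_encard_eq (le_of_le_of_eq (Nat.cast_le.2 hk) hs.cast_ncard_eq)
  exact ⟨t, hts, Nat.cast_injective ((hs.subset hts).cast_ncard_eq.trans ht)⟩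

theorem fin2_sub_eq_zero_iff (a b : Fin 2) : ((b : ℤ) - a = 0) ↔ a = b := by
  revert a b; decide

theorem fin2_sub_eq_one_or_sub_eq_neg_one_iff (a b : Fin 2) :
    ((b : ℤ) - a = 1 ∨ (b : ℤ) - a = -1) ↔ a ≠ b := by
  revert a b; decide

theorem fin2_sub_eq_one_iff_of_ne {a b : Fin 2} (h : a ≠ b) : ((b : ℤ) - a = 1) ↔ a = 0 := by
  revert a b; decide

theorem fin2_eq_zero_iff_not_of_ne {a b : Fin 2} (h : a ≠ b) : b = 0 ↔ ¬ a = 0 := by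
  revert a b; decide

namespace SimpleGraph

variable {V : Type*}

structure IsOrientation_s18 (G : SimpleGraph V) (D : V → V → Prop) : Prop where
  adj : ∀ {u v}, D u v → G.Adj u v
  iff_not : ∀ {u v}, G.Adj u v → (D u v ↔ ¬ D v u)

def edgesWith (G : SimpleGraph V) (Q : V → V → Prop) : Set (Sym2 V) :=
  {e | ∃ u v, e = s(u, v) ∧ G.Adj u v ∧ Q u v}

theorem orientable23_iff (G : SimpleGraph V) :
    Orientable23 G ↔ ∃ D, G.IsOrientation_s18 D ∧ Cordial23 D :=
  ⟨fun ⟨D, hadj, hiff, hD⟩ => ⟨D, ⟨hadj _ _, hiff _ _⟩, hD⟩,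
    fun ⟨D, hD, hc⟩ => ⟨D, fun _ _ => hD.adj, fun _ _ => hD.iff_not, hc⟩⟩

namespace IsOrientation_s18

variable {G : SimpleGraph V} {D : V → V → Prop}

theorem not_of_rel (hD : G.IsOrientation_s18 D) {u v : V} (h : D u v) : ¬ D v u :=
  (hD.iff_not (hD.adj h)).1 h

theorem of_not (hD : G.IsOrientation_s18 D) {u v : V} (huv : G.Adj u v) (h : ¬ D u v) : D v u :=
  (hD.iff_not huv.symm).2 h

theorem card_arcs (hD : G.IsOrientation_s18 D) {Q : V → V → Prop} (hQ : ∀ u v, Q u v → Q v u) :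
    Nat.card {p : V × V // D p.1 p.2 ∧ Q p.1 p.2} = (G.edgesWith Q).ncard := by
  refine Nat.card_congr (Equiv.ofBijective
    (fun p => ⟨s(p.1.1, p.1.2), p.1.1, p.1.2, rfl, hD.adj p.2.1, p.2.2⟩) ⟨?_, ?_⟩)
  · rintro ⟨⟨u, v⟩, huv, _⟩ ⟨⟨u', v'⟩, hvu, _⟩ h
    rcases Sym2.eq_iff.1 (congrArg Subtype.val h) with ⟨rfl, rfl⟩ | ⟨rfl, rfl⟩
    · rfl
    · exact absurd hvu (hD.not_of_rel huv)
  · rintro ⟨e, u, v, rfl, huv, hQuv⟩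
    by_cases h : D u v
    · exact ⟨⟨(u, v), h, hQuv⟩, rfl⟩
    · exact ⟨⟨(v, u), hD.of_not huv h, hQ u v hQuv⟩, Subtype.ext Sym2.eq_swap⟩

theorem arcCount_zero (hD : G.IsOrientation_s18 D) (f : V → Fin 2) :
    arcCount D f 0 = (G.edgesWith fun u v => f u = f v).ncard := by
  rw [← hD.card_arcs fun _ _ => Eq.symm]
  exact Nat.card_congr
    (Equiv.subtypeEquivRight fun _ => and_congr_right' (fin2_sub_eq_zero_iff _ _))

theorem arcCount_one_add_arcCount_neg_one [Finite V] (hD : G.IsOrientation_s18 D) (f : V → Fin 2) :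
    arcCount D f 1 + arcCount D f (-1) = (G.edgesWith fun u v => f u ≠ f v).ncard := by
  classical
  rw [arcCount, arcCount, ← Nat.card_sum, ← hD.card_arcs fun _ _ => Ne.symm]
  refine Nat.card_congr ((subtypeOrEquiv _ _ ?_).symm.trans (Equiv.subtypeEquivRight ?_))
  · rintro P h1 h2 p hp
    have hone := (h1 p hp).2
    have hneg := (h2 p hp).2
    omega
  · intro p
    rw [← fin2_sub_eq_one_or_sub_eq_neg_one_iff, and_or_left]

end IsOrientation_s18

theorem ncard_edgesWith_add_ncard_edgesWith_not [Finite V] (G : SimpleGraph V)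
    {Q : V → V → Prop} (hQ : ∀ u v, Q u v → Q v u) :
    (G.edgesWith Q).ncard + (G.edgesWith fun u v => ¬ Q u v).ncard = G.edgeSet.ncard := by
  rw [← Set.ncard_union_eq]
  · congr 1
    ext e
    induction e using Sym2.ind with
    | _ x y =>
      simp only [edgesWith, Set.mem_union, Set.mem_ofPred_eq]
      constructor
      · rintro (⟨u, v, he, huv, -⟩ | ⟨u, v, he, huv, -⟩) <;> rwa [he]
      · intro hxy
        by_cases hq : Q x y
        exacts [Or.inl ⟨x, y, rfl, hxy, hq⟩, Or.inr ⟨x, y, rfl, hxy, hq⟩]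
  · rw [Set.disjoint_left]
    rintro e ⟨u, v, rfl, -, hQ'⟩ ⟨u', v', he, -, hnQ⟩
    rcases Sym2.eq_iff.1 he with ⟨rfl, rfl⟩ | ⟨rfl, rfl⟩
    · exact hnQ hQ'
    · exact hnQ (hQ _ _ hQ')

theorem IsOrientation_s18.arcCount_add_arcCount_add_arcCount [Finite V] {G : SimpleGraph V}
    {D : V → V → Prop} (hD : G.IsOrientation_s18 D) (f : V → Fin 2) :
    arcCount D f 1 + arcCount D f (-1) + arcCount D f 0 = G.edgeSet.ncard := by
  rw [hD.arcCount_one_add_arcCount_neg_one, hD.arcCount_zero, add_comm]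
  exact G.ncard_edgesWith_add_ncard_edgesWith_not fun _ _ => Eq.symm

/-- The bichromatic edges in `T` get label `1`, the other bichromatic edges label `-1`. -/
def labelOrientation [LinearOrder V] (G : SimpleGraph V) (f : V → Fin 2) (T : Set (Sym2 V))
    (u v : V) : Prop :=
  G.Adj u v ∧ if f u = f v then u < v else (f u = 0 ↔ s(u, v) ∈ T)

theorem isOrientation_labelOrientation [LinearOrder V] (G : SimpleGraph V) (f : V → Fin 2)
    (T : Set (Sym2 V)) : G.IsOrientation_s18 (G.labelOrientation f T) where
  adj h := h.1
  iff_not {u v} huv := by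
    simp only [labelOrientation, huv, huv.symm, true_and, Sym2.eq_swap (a := v)]
    split_ifs with h h' h'
    · exact lt_iff_le_and_ne.trans (and_iff_left huv.ne) |>.trans not_lt.symm
    · exact absurd h.symm h'
    · exact absurd h'.symm h
    · rw [fin2_eq_zero_iff_not_of_ne h]
      tauto

theorem arcCount_labelOrientation_one [LinearOrder V] (G : SimpleGraph V) (f : V → Fin 2)
    (T : Set (Sym2 V)) :
    arcCount (G.labelOrientation f T) f 1 = (G.edgesWith (fun u v => f u ≠ f v) ∩ T).ncard := by
  have hT : G.edgesWith (fun u v => f u ≠ f v) ∩ T =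
      G.edgesWith (fun u v => f u ≠ f v ∧ s(u, v) ∈ T) := by
    ext e
    constructor
    · rintro ⟨⟨u, v, rfl, huv, hne⟩, he⟩
      exact ⟨u, v, rfl, huv, hne, he⟩
    · rintro ⟨u, v, rfl, huv, hne, he⟩
      exact ⟨⟨u, v, rfl, huv, hne⟩, he⟩
  rw [hT, ← (isOrientation_labelOrientation G f T).card_arcs
    fun u v ⟨hne, he⟩ => ⟨hne.symm, Sym2.eq_swap (a := v) ▸ he⟩]
  refine Nat.card_congr (Equiv.subtypeEquivRight fun ⟨u, v⟩ => ?_)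
  simp only [labelOrientation]
  split_ifs with h
  · simp [h]
  · rw [fin2_sub_eq_one_iff_of_ne h]
    tauto

theorem exists_isOrientation_arcCount_one_eq [Finite V] (G : SimpleGraph V) (f : V → Fin 2)
    {k : ℕ} (hk : k ≤ (G.edgesWith fun u v => f u ≠ f v).ncard) :
    ∃ D, G.IsOrientation_s18 D ∧ arcCount D f 1 = k := by
  obtain ⟨T, hTB, rfl⟩ := Set.exists_subset_ncard_eq hk
  let _ : LinearOrder V := WellOrderingRel.isWellOrder.linearOrder
  refine ⟨G.labelOrientation f T, isOrientation_labelOrientation G f T, ?_⟩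
  rw [arcCount_labelOrientation_one, Set.inter_eq_right.2 hTB]

end SimpleGraph

/-- A simple graph with m edges is (2,3)-orientable if and only if some friendly
vertex labelling makes the number γ of monochromatic edges satisfy |3γ - m| ≤ 2. -/
theorem orientable_iff_third_monochromatic {V : Type*} [Fintype V]
    (G : SimpleGraph V) (m : ℕ) (hm : Nat.card G.edgeSet = m) :
    Orientable23 G ↔
      ∃ f : V → Fin 2, Friendly f ∧
        |3 * (Nat.card {e : Sym2 V // ∃ u v : V, e = s(u, v) ∧ G.Adj u v ∧ f u = f v} : ℤ)
          - (m : ℤ)| ≤ 2 := by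
  have hcount : ∀ {D}, G.IsOrientation_s18 D → ∀ f : V → Fin 2,
      arcCount D f 0 = Nat.card {e : Sym2 V // ∃ u v : V, e = s(u, v) ∧ G.Adj u v ∧ f u = f v} ∧
        arcCount D f 1 + arcCount D f (-1) + arcCount D f 0 = m := fun hD f =>
    ⟨hD.arcCount_zero f, hm ▸ hD.arcCount_add_arcCount_add_arcCount f⟩
  rw [G.orientable23_iff]
  constructor
  · rintro ⟨D, hD, f, hf, hαβ, hαγ, hβγ⟩
    obtain ⟨hγ, htotal⟩ := hcount hD f
    refine ⟨f, hf, ?_⟩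
    simp only [abs_le] at *
    omega
  · rintro ⟨f, hf, hγ⟩
    obtain ⟨D, hD, hα⟩ := G.exists_isOrientation_arcCount_one_eq f (Nat.div_le_self _ 2)
    obtain ⟨hγ', htotal⟩ := hcount hD f
    have hαβ := hD.arcCount_one_add_arcCount_neg_one f
    refine ⟨D, hD, f, hf, ?_⟩
    simp only [abs_le] at *
    omega
end
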